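/- arXiv:chao-dyn/9901031 — 4 statements merged into one kernel-verified Lean document; each statement's English description precedes it below -/
import Mathlib

section
/- Let N ≥ 1 be an integer and let A = [[a,b],[c,d]] ∈ SL(2,ℤ) satisfy the theta-group condition ab ≡ cd ≡ 0 (mod 2). Then there exists a unitary operator U on H_N such that U⁻¹ T_N(n) U = T_N(nA) for all n = (n₁,n₂) ∈ ℤ², where nA = (n₁a + n₂c, n₁b + n₂d). -/
set_option linter.unusedSectionVars false
open Complex Matrix

noncomputable def Tmat (N : ℕ) [NeZero N] (n : ℤ × ℤ) : Matrix (ZMod N) (ZMod N) ℂ :=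
  fun Q Q' =>
    if Q' = Q + (n.1 : ZMod N) then
      Complex.exp (Real.pi * Complex.I * n.1 * n.2 / N) *
        Complex.exp (2 * Real.pi * Complex.I * n.2 * (Q.val : ℂ) / N)
    else 0

namespace Prop1
variable (N : ℕ) [NeZero N]

noncomputable def ph (t : ℤ) : ℂ := Complex.exp (Real.pi * Complex.I * t / N)

lemma ph_add (s t : ℤ) : ph N (s + t) = ph N s * ph N t := by
  rw [ph, ph, ph, ← Complex.exp_add]; congr 1; push_cast; ring

lemma ph_zero : ph N 0 = 1 := by simp [ph]

lemma ph_dvd (t : ℤ) (h : (2 * (N : ℤ)) ∣ t) : ph N t = 1 := by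
  obtain ⟨k, rfl⟩ := h
  have hN : (N : ℂ) ≠ 0 := Nat.cast_ne_zero.mpr (NeZero.ne N)
  rw [ph, show ((Real.pi : ℂ)) * Complex.I * ((2 * (N : ℤ) * k : ℤ) : ℂ) / N
      = (k : ℤ) * (2 * Real.pi * Complex.I) by push_cast; field_simp,
    Complex.exp_int_mul_two_pi_mul_I]

lemma ph_congr {s t : ℤ} (h : (2 * (N : ℤ)) ∣ s - t) : ph N s = ph N t := by
  have h1 : ph N (s - t) = 1 := ph_dvd N _ h
  have h2 := ph_add N t (s - t)
  rw [show t + (s - t) = s by ring, h1, mul_one] at h2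
  exact h2

lemma ph_conj (t : ℤ) : (starRingEnd ℂ) (ph N t) = ph N (-t) := by
  rw [ph, ph, ← Complex.exp_conj]
  congr 1
  simp only [map_div₀, _root_.map_mul, Complex.conj_ofReal, Complex.conj_I, map_intCast, map_natCast]
  push_cast; ring

lemma ph_pow (t : ℤ) (k : ℕ) : ph N t ^ k = ph N (k * t) := by
  rw [ph, ph, ← Complex.exp_nat_mul]; congr 1; push_cast; ring

lemma ph_two_mul_eq_one_iff (t : ℤ) : ph N (2 * t) = 1 ↔ (N : ℤ) ∣ t := by
  constructor
  · intro h
    rw [ph, Complex.exp_eq_one_iff] at h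
    obtain ⟨k, hk⟩ := h
    have hN : (N : ℂ) ≠ 0 := Nat.cast_ne_zero.mpr (NeZero.ne N)
    have hpi : (Real.pi : ℂ) ≠ 0 := Complex.ofReal_ne_zero.mpr Real.pi_ne_zero
    have h2 : (2 * (Real.pi : ℂ) * Complex.I) * (t : ℂ) = (2 * (Real.pi : ℂ) * Complex.I) * ((k : ℂ) * (N : ℂ)) := by
      field_simp at hk
      push_cast at hk ⊢
      linear_combination (Real.pi : ℂ) * Complex.I * hk
    have h3 : (t : ℂ) = ((k * N : ℤ) : ℂ) := by
      have := mul_left_cancel₀ (by simp [hpi, Complex.I_ne_zero] : (2 * (Real.pi : ℂ) * Complex.I) ≠ 0) h2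
      push_cast
      exact this
    exact ⟨k, by rw [mul_comm] at h3; exact_mod_cast h3⟩
  · rintro ⟨s, rfl⟩
    exact ph_dvd N _ ⟨s, by ring⟩

lemma sum_ph (t : ℤ) (ht : ¬ (N : ℤ) ∣ t) (M : ℕ) (hM : (N : ℤ) ∣ (M : ℤ)) :
    ∑ j ∈ Finset.range M, ph N (2 * t * j) = 0 := by
  have hz : ∀ j : ℕ, ph N (2 * t * j) = ph N (2 * t) ^ j := by
    intro j; rw [ph_pow]; congr 1; ring
  have hne : ph N (2 * t) ≠ 1 := fun h => ht ((ph_two_mul_eq_one_iff N t).mp h)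
  rw [Finset.sum_congr rfl (fun j _ => hz j), geom_sum_eq hne]
  obtain ⟨e, he⟩ := hM
  rw [ph_pow, show ((M : ℤ) * (2 * t)) = 2 * ((M : ℤ) * t) by ring,
    ph_dvd N _ ⟨e * t, by rw [he]; ring⟩]
  simp


noncomputable def Tm (n : ℤ × ℤ) : Matrix (ZMod N) (ZMod N) ℂ :=
  fun Q Q' => if Q' = Q + (n.1 : ZMod N) then ph N (n.1 * n.2 + 2 * n.2 * (Q.val : ℤ)) else 0

lemma Tmat_eq (n : ℤ × ℤ) : Tmat N n = Tm N n := by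
  funext Q Q'
  rw [Tmat, Tm]
  split_ifs with h
  · rw [ph_add]
    congr 1
    · rw [ph]; congr 1; push_cast; ring
    · rw [ph]; congr 1; push_cast; ring
  · rfl

/-- exponents can be shifted by multiples of N in the `2*t*x` part -/
lemma ph_shift (s t x y : ℤ) (h : ((x : ZMod N) = (y : ZMod N))) :
    ph N (s + 2 * t * x) = ph N (s + 2 * t * y) := by
  apply ph_congr
  have hd : (N : ℤ) ∣ x - y := by
    rwa [← ZMod.intCast_zmod_eq_zero_iff_dvd, Int.cast_sub, sub_eq_zero]
  obtain ⟨k, hk⟩ := hd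
  exact ⟨t * k, by linear_combination 2 * t * hk⟩

lemma val_intCast_eq (R : ZMod N) : (((R.val : ℤ) : ZMod N)) = R := by
  rw [Int.cast_natCast, ZMod.natCast_zmod_val]

lemma Tm_mul (m n : ℤ × ℤ) :
    Tm N m * Tm N n = ph N (m.1 * n.2 - m.2 * n.1) • Tm N (m.1 + n.1, m.2 + n.2) := by
  funext Q Q'
  rw [Matrix.mul_apply, Finset.sum_eq_single (Q + (m.1 : ZMod N))]
  · have hcond : (Q' = Q + (m.1 : ZMod N) + (n.1 : ZMod N)) ↔
        (Q' = Q + (((m.1 + n.1 : ℤ) : ZMod N))) := by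
      push_cast; rw [add_assoc]
    have e1 : Tm N m Q (Q + (m.1 : ZMod N)) = ph N (m.1 * m.2 + 2 * m.2 * (Q.val : ℤ)) := by
      simp only [Tm, eq_self_iff_true, if_true]
    by_cases h : Q' = Q + (m.1 : ZMod N) + (n.1 : ZMod N)
    · have e2 : Tm N n (Q + (m.1 : ZMod N)) Q' =
          ph N (n.1 * n.2 + 2 * n.2 * (((Q + (m.1 : ZMod N)).val : ℤ))) := by
        simp only [Tm]; rw [if_pos (by rw [h, add_assoc])]
      have e3 : (ph N (m.1 * n.2 - m.2 * n.1) • Tm N (m.1 + n.1, m.2 + n.2)) Q Q' =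
          ph N (m.1 * n.2 - m.2 * n.1) *
            ph N ((m.1 + n.1) * (m.2 + n.2) + 2 * (m.2 + n.2) * (Q.val : ℤ)) := by
        simp only [Tm, Matrix.smul_apply, smul_eq_mul]
        rw [if_pos (hcond.mp h)]
      have hval : ph N (n.1 * n.2 + 2 * n.2 * (((Q + (m.1 : ZMod N)).val : ℤ))) =
          ph N (n.1 * n.2 + 2 * n.2 * ((Q.val : ℤ) + m.1)) := by
        apply ph_shift
        push_cast [ZMod.natCast_zmod_val]
        rfl
      rw [e1, e2, e3, hval, ← ph_add, ← ph_add]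
      congr 1
      ring
    · have e2 : Tm N n (Q + (m.1 : ZMod N)) Q' = 0 := by
        simp only [Tm]; rw [if_neg (fun hh => h (by rw [hh, add_assoc]))]
      have e3 : (ph N (m.1 * n.2 - m.2 * n.1) • Tm N (m.1 + n.1, m.2 + n.2)) Q Q' = 0 := by
        simp only [Tm, Matrix.smul_apply, smul_eq_mul]
        rw [if_neg (fun hh => h (hcond.mpr hh)), mul_zero]
      rw [e2, e3, mul_zero]
  · intro R _ hR
    have : Tm N m Q R = 0 := by
      simp only [Tm]; rw [if_neg hR]
    rw [this, zero_mul]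
  · intro h; exact absurd (Finset.mem_univ _) h

lemma Tm_star (n : ℤ × ℤ) : star (Tm N n) = Tm N (-n.1, -n.2) := by
  funext Q Q'
  rw [Matrix.star_apply]
  simp only [Tm]
  by_cases h : Q' = Q + ((-n.1 : ℤ) : ZMod N)
  · have h' : Q = Q' + (n.1 : ZMod N) := by
      rw [h]; push_cast; ring
    rw [if_pos h, if_pos h']
    rw [show star (ph N (n.1 * n.2 + 2 * n.2 * (Q'.val : ℤ))) =
        (starRingEnd ℂ) (ph N (n.1 * n.2 + 2 * n.2 * (Q'.val : ℤ))) from rfl, ph_conj]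
    apply ph_congr
    have hd : (N : ℤ) ∣ ((Q'.val : ℤ) - ((Q.val : ℤ) - n.1)) := by
      rw [← ZMod.intCast_zmod_eq_zero_iff_dvd]
      push_cast [ZMod.natCast_zmod_val]
      rw [h]; push_cast; ring
    obtain ⟨k, hk⟩ := hd
    exact ⟨-(n.2 * k), by linear_combination (-2 : ℤ) * n.2 * hk⟩
  · have h' : ¬ Q = Q' + (n.1 : ZMod N) := by
      intro hh
      exact h (by rw [hh]; push_cast; ring)
    rw [if_neg h, if_neg h', star_zero]

lemma Tm_zero : Tm N (0, 0) = 1 := by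
  funext Q Q'
  simp [Tm, Matrix.one_apply, eq_comm, ph_zero]

lemma Tm_mul_star (n : ℤ × ℤ) : Tm N n * star (Tm N n) = 1 := by
  rw [Tm_star, Tm_mul]
  have h1 : n.1 * -n.2 - n.2 * -n.1 = 0 := by ring
  have h2 : (n.1 + -n.1, n.2 + -n.2) = ((0 : ℤ), (0 : ℤ)) := by
    simp
  rw [h1, h2, ph_zero, Tm_zero, one_smul]

lemma Tm_star_mul (n : ℤ × ℤ) : star (Tm N n) * Tm N n = 1 := by
  rw [Tm_star, Tm_mul]
  have h1 : -n.1 * n.2 - -n.2 * n.1 = 0 := by ring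
  have h2 : (-n.1 + n.1, -n.2 + n.2) = ((0 : ℤ), (0 : ℤ)) := by
    simp
  rw [h1, h2, ph_zero, Tm_zero, one_smul]

lemma Tm_congr {m n : ℤ × ℤ} (h1 : ((m.1 : ZMod (2 * N)) = (n.1 : ZMod (2 * N))))
    (h2 : ((m.2 : ZMod (2 * N)) = (n.2 : ZMod (2 * N)))) : Tm N m = Tm N n := by
  have d1 : (2 * (N : ℤ)) ∣ m.1 - n.1 := by
    have := (ZMod.intCast_zmod_eq_zero_iff_dvd (m.1 - n.1) (2 * N)).mp
      (by push_cast; rw [h1]; ring)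
    rwa [Nat.cast_mul, Nat.cast_ofNat] at this
  have d2 : (2 * (N : ℤ)) ∣ m.2 - n.2 := by
    have := (ZMod.intCast_zmod_eq_zero_iff_dvd (m.2 - n.2) (2 * N)).mp
      (by push_cast; rw [h2]; ring)
    rwa [Nat.cast_mul, Nat.cast_ofNat] at this
  obtain ⟨k1, hk1⟩ := d1
  obtain ⟨k2, hk2⟩ := d2
  have hc : ((m.1 : ZMod N)) = ((n.1 : ZMod N)) := by
    rw [← sub_eq_zero, ← Int.cast_sub, ZMod.intCast_zmod_eq_zero_iff_dvd]
    exact ⟨2 * k1, by linear_combination hk1⟩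
  funext Q Q'
  simp only [Tm, hc]
  by_cases h : Q' = Q + (n.1 : ZMod N)
  · rw [if_pos h, if_pos h]
    apply ph_congr
    exact ⟨k1 * m.2 + n.1 * k2 + 2 * (Q.val : ℤ) * k2, by linear_combination m.2 * hk1 + (n.1 + 2 * (Q.val : ℤ)) * hk2⟩
  · rw [if_neg h, if_neg h]

instance : NeZero (2 * N) := ⟨by have := NeZero.ne N; omega⟩

lemma sum_val {M : ℕ} [NeZero M] (f : ℕ → ℂ) :
    ∑ x : ZMod M, f x.val = ∑ q ∈ Finset.range M, f q := by
  refine Finset.sum_nbij' (fun x => x.val) (fun q => (q : ZMod M)) ?_ ?_ ?_ ?_ ?_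
  · intro x _; exact Finset.mem_range.mpr (ZMod.val_lt x)
  · intro q _; exact Finset.mem_univ _
  · intro x _; exact ZMod.natCast_zmod_val x
  · intro q hq; exact ZMod.val_natCast_of_lt (Finset.mem_range.mp hq)
  · intro x _; rfl

lemma sum_cast (f : ZMod N → ℂ) :
    ∑ q ∈ Finset.range N, f (q : ZMod N) = ∑ x : ZMod N, f x := by
  rw [← sum_val (fun q => f (q : ZMod N))]
  apply Finset.sum_congr rfl
  intro x _
  rw [ZMod.natCast_zmod_val]

/-- sum over `ZMod (2*N)` of a function of the `ZMod N` reduction gives twice the sum -/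
lemma sum_double (f : ZMod N → ℂ) :
    ∑ x : ZMod (2 * N), f ((x.val : ZMod N)) = 2 * ∑ P : ZMod N, f P := by
  rw [sum_val (fun q => f (q : ZMod N)), show 2 * N = N + N by ring,
    Finset.sum_range_add, two_mul]
  congr 1
  · exact sum_cast N f
  · rw [← sum_cast N f]
    apply Finset.sum_congr rfl
    intro q _
    congr 1
    push_cast
    simp

lemma conj_term (n : ℤ × ℤ) (Y : Matrix (ZMod N) (ZMod N) ℂ) (Q Q' : ZMod N) :
    (Tm N n * Y * star (Tm N n)) Q Q' =
      ph N (2 * n.2 * ((Q.val : ℤ) - (Q'.val : ℤ))) * Y (Q + (n.1 : ZMod N)) (Q' + (n.1 : ZMod N)) := by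
  rw [Tm_star, Matrix.mul_apply, Finset.sum_eq_single (Q' + (n.1 : ZMod N))]
  · have e2 : Tm N (-n.1, -n.2) (Q' + (n.1 : ZMod N)) Q' =
        ph N (-n.1 * -n.2 + 2 * -n.2 * (((Q' + (n.1 : ZMod N)).val : ℤ))) := by
      simp only [Tm]
      rw [if_pos (by push_cast; ring)]
    have e1 : (Tm N n * Y) Q (Q' + (n.1 : ZMod N)) =
        ph N (n.1 * n.2 + 2 * n.2 * (Q.val : ℤ)) * Y (Q + (n.1 : ZMod N)) (Q' + (n.1 : ZMod N)) := by
      rw [Matrix.mul_apply, Finset.sum_eq_single (Q + (n.1 : ZMod N))]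
      · simp only [Tm, eq_self_iff_true, if_true]
      · intro R _ hR
        have : Tm N n Q R = 0 := by simp only [Tm]; rw [if_neg hR]
        rw [this, zero_mul]
      · intro hR; exact absurd (Finset.mem_univ _) hR
    rw [e1, e2]
    have hval : ph N (-n.1 * -n.2 + 2 * -n.2 * (((Q' + (n.1 : ZMod N)).val : ℤ))) =
        ph N (-n.1 * -n.2 + 2 * -n.2 * ((Q'.val : ℤ) + n.1)) := by
      apply ph_shift
      push_cast [ZMod.natCast_zmod_val]
      rfl
    rw [hval, mul_assoc, mul_comm (Y _ _), ← mul_assoc, ← ph_add]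
    congr 2
    ring
  · intro R _ hR
    have : Tm N (-n.1, -n.2) R Q' = 0 := by
      simp only [Tm]
      rw [if_neg (fun hh => hR (by rw [hh]; push_cast; ring))]
    rw [this, mul_zero]
  · intro hR; exact absurd (Finset.mem_univ _) hR

lemma average (Y : Matrix (ZMod N) (ZMod N) ℂ) :
    ∑ x : ZMod (2 * N) × ZMod (2 * N),
        Tm N ((x.1.val : ℤ), (x.2.val : ℤ)) * Y * star (Tm N ((x.1.val : ℤ), (x.2.val : ℤ)))
      = ((4 * N : ℂ) * Matrix.trace Y) • (1 : Matrix (ZMod N) (ZMod N) ℂ) := by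
  ext Q Q'
  rw [Matrix.sum_apply]
  have hterm : ∀ x : ZMod (2 * N) × ZMod (2 * N),
      (Tm N ((x.1.val : ℤ), (x.2.val : ℤ)) * Y * star (Tm N ((x.1.val : ℤ), (x.2.val : ℤ)))) Q Q'
        = ph N (2 * (x.2.val : ℤ) * ((Q.val : ℤ) - (Q'.val : ℤ))) *
            Y (Q + ((x.1.val : ZMod N))) (Q' + ((x.1.val : ZMod N))) := by
    intro x
    rw [conj_term]
    push_cast
    rfl
  rw [Finset.sum_congr rfl (fun x _ => hterm x), Fintype.sum_prod_type_right]
  have hsplit : ∀ v : ZMod (2 * N),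
      ∑ u : ZMod (2 * N), ph N (2 * (v.val : ℤ) * ((Q.val : ℤ) - (Q'.val : ℤ))) *
          Y (Q + ((u.val : ZMod N))) (Q' + ((u.val : ZMod N)))
        = ph N (2 * (v.val : ℤ) * ((Q.val : ℤ) - (Q'.val : ℤ))) *
            ∑ u : ZMod (2 * N), Y (Q + ((u.val : ZMod N))) (Q' + ((u.val : ZMod N))) := by
    intro v; rw [Finset.mul_sum]
  rw [Finset.sum_congr rfl (fun v _ => hsplit v), ← Finset.sum_mul]
  by_cases h : Q = Q'
  · subst h
    have h1 : ∑ v : ZMod (2 * N), ph N (2 * (v.val : ℤ) * ((Q.val : ℤ) - (Q.val : ℤ))) = (2 * N : ℂ) := by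
      have : ∀ v : ZMod (2 * N), ph N (2 * (v.val : ℤ) * ((Q.val : ℤ) - (Q.val : ℤ))) = 1 := by
        intro v; rw [show 2 * (v.val : ℤ) * ((Q.val : ℤ) - (Q.val : ℤ)) = 0 by ring, ph_zero]
      rw [Finset.sum_congr rfl (fun v _ => this v), Finset.sum_const, Finset.card_univ, ZMod.card]
      simp
    have h2 : ∑ u : ZMod (2 * N), Y (Q + ((u.val : ZMod N))) (Q + ((u.val : ZMod N)))
        = 2 * Matrix.trace Y := by
      rw [sum_double N (fun P => Y (Q + P) (Q + P))]
      congr 1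
      rw [Matrix.trace]
      exact Equiv.sum_comp (Equiv.addLeft Q) (fun P => Y P P)
    rw [h1, h2]
    simp only [Matrix.smul_apply, Matrix.one_apply_eq, smul_eq_mul, mul_one]
    ring
  · have hval : Q.val ≠ Q'.val := fun hh => h (by
      rw [← ZMod.natCast_zmod_val Q, ← ZMod.natCast_zmod_val Q', hh])
    set k : ℤ := (Q.val : ℤ) - (Q'.val : ℤ) with hk
    have hk0 : k ≠ 0 := by
      simp only [hk, sub_ne_zero]
      exact_mod_cast hval
    have hnd : ¬ (N : ℤ) ∣ k := by
      intro hd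
      apply hk0
      apply Int.eq_zero_of_abs_lt_dvd hd
      have l1 : (Q.val : ℤ) < N := by exact_mod_cast ZMod.val_lt Q
      have l2 : (Q'.val : ℤ) < N := by exact_mod_cast ZMod.val_lt Q'
      have l3 : 0 ≤ (Q.val : ℤ) := Int.natCast_nonneg _
      have l4 : 0 ≤ (Q'.val : ℤ) := Int.natCast_nonneg _
      rw [abs_lt]
      constructor <;> [linarith; linarith]
    have h1 : ∑ v : ZMod (2 * N), ph N (2 * (v.val : ℤ) * k) = 0 := by
      have e : ∀ v : ZMod (2 * N), ph N (2 * (v.val : ℤ) * k) = ph N (2 * k * (v.val : ℤ)) := by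
        intro v; congr 1; ring
      rw [Finset.sum_congr rfl (fun v _ => e v),
        sum_val (fun q => ph N (2 * k * (q : ℤ)))]
      exact sum_ph N k hnd (2 * N) ⟨2, by push_cast; ring⟩
    rw [h1, zero_mul]
    simp [Matrix.one_apply_ne h]

lemma Tm_comm_scalar (Z : Matrix (ZMod N) (ZMod N) ℂ)
    (hZ : ∀ n : ℤ × ℤ, Tm N n * Z = Z * Tm N n) :
    Z = ((Matrix.trace Z) / N) • 1 := by
  have h1 := average N Z
  have h2 : ∀ x : ZMod (2 * N) × ZMod (2 * N),
      Tm N ((x.1.val : ℤ), (x.2.val : ℤ)) * Z * star (Tm N ((x.1.val : ℤ), (x.2.val : ℤ))) = Z := by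
    intro x
    rw [hZ, mul_assoc, Tm_mul_star, mul_one]
  rw [Finset.sum_congr rfl (fun x _ => h2 x), Finset.sum_const, Finset.card_univ] at h1
  have hcard : Fintype.card (ZMod (2 * N) × ZMod (2 * N)) = 2 * N * (2 * N) := by
    simp [ZMod.card]
  rw [hcard, ← Nat.cast_smul_eq_nsmul ℂ] at h1
  have hN : ((N : ℂ)) ≠ 0 := Nat.cast_ne_zero.mpr (NeZero.ne N)
  have hc : ((2 * N * (2 * N) : ℕ) : ℂ) ≠ 0 := by
    rw [Nat.cast_ne_zero]
    have := NeZero.ne N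
    positivity
  have h4 : Z = (((2 * N * (2 * N) : ℕ) : ℂ))⁻¹ • (((4 * N : ℂ) * Matrix.trace Z) • 1) := by
    rw [← h1, smul_smul, inv_mul_cancel₀ hc, one_smul]
  rw [h4, smul_smul]
  congr 1
  push_cast
  field_simp
  ring
  simp [Matrix.trace_smul, Matrix.trace_one, ZMod.card, hN]

def Sig (a b c d : ℤ) (n : ℤ × ℤ) : ℤ × ℤ := (n.1 * a + n.2 * c, n.1 * b + n.2 * d)

def lft (x : ZMod (2 * N) × ZMod (2 * N)) : ℤ × ℤ := ((x.1.val : ℤ), (x.2.val : ℤ))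

lemma cast_lift (u : ZMod (2 * N)) : (((u.val : ℤ) : ℤ) : ZMod (2 * N)) = u := by
  rw [Int.cast_natCast, ZMod.natCast_zmod_val]

variable (a b c d : ℤ)

noncomputable def Sop (X : Matrix (ZMod N) (ZMod N) ℂ) : Matrix (ZMod N) (ZMod N) ℂ :=
  ∑ x : ZMod (2 * N) × ZMod (2 * N),
    Tm N (lft N x) * X * star (Tm N (Sig a b c d (lft N x)))

lemma Tm_Sig_congr {m n : ℤ × ℤ} (h1 : ((m.1 : ZMod (2 * N)) = n.1))
    (h2 : ((m.2 : ZMod (2 * N)) = n.2)) :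
    Tm N (Sig a b c d m) = Tm N (Sig a b c d n) := by
  apply Tm_congr
  · show (((m.1 * a + m.2 * c : ℤ) : ZMod (2 * N))) = ((n.1 * a + n.2 * c : ℤ) : ZMod (2 * N))
    push_cast
    rw [h1, h2]
  · show (((m.1 * b + m.2 * d : ℤ) : ZMod (2 * N))) = ((n.1 * b + n.2 * d : ℤ) : ZMod (2 * N))
    push_cast
    rw [h1, h2]

lemma intertwine (hdet : a * d - b * c = 1) (X : Matrix (ZMod N) (ZMod N) ℂ) (m : ℤ × ℤ) :
    Tm N m * Sop N a b c d X = Sop N a b c d X * Tm N (Sig a b c d m) := by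
  have key : Tm N m * Sop N a b c d X * star (Tm N (Sig a b c d m)) = Sop N a b c d X := by
    rw [Sop, Finset.mul_sum, Finset.sum_mul]
    apply Fintype.sum_equiv (Equiv.addLeft (((m.1 : ZMod (2 * N)), (m.2 : ZMod (2 * N))) :
      ZMod (2 * N) × ZMod (2 * N)))
    intro x
    set mb : ZMod (2 * N) × ZMod (2 * N) := ((m.1 : ZMod (2 * N)), (m.2 : ZMod (2 * N))) with hmb
    simp only [Equiv.coe_addLeft]
    have hA : Tm N m * Tm N (lft N x) =
        ph N (m.1 * (lft N x).2 - m.2 * (lft N x).1) •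
          Tm N (m.1 + (lft N x).1, m.2 + (lft N x).2) := Tm_mul N m (lft N x)
    have hB : Tm N (Sig a b c d m) * Tm N (Sig a b c d (lft N x)) =
        ph N (m.1 * (lft N x).2 - m.2 * (lft N x).1) •
          Tm N (Sig a b c d (m.1 + (lft N x).1, m.2 + (lft N x).2)) := by
      rw [Tm_mul]
      have e1 : (Sig a b c d m).1 * (Sig a b c d (lft N x)).2 -
          (Sig a b c d m).2 * (Sig a b c d (lft N x)).1 =
          m.1 * (lft N x).2 - m.2 * (lft N x).1 := by
        simp only [Sig]
        linear_combination (m.1 * (lft N x).2 - m.2 * (lft N x).1) * hdet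
      have e2 : ((Sig a b c d m).1 + (Sig a b c d (lft N x)).1,
          (Sig a b c d m).2 + (Sig a b c d (lft N x)).2) =
          Sig a b c d (m.1 + (lft N x).1, m.2 + (lft N x).2) := by
        simp only [Sig, Prod.mk.injEq]
        constructor <;> ring
      rw [e1, e2]
    have hstar : star (Tm N (Sig a b c d (lft N x))) * star (Tm N (Sig a b c d m)) =
        (starRingEnd ℂ) (ph N (m.1 * (lft N x).2 - m.2 * (lft N x).1)) •
          star (Tm N (Sig a b c d (m.1 + (lft N x).1, m.2 + (lft N x).2))) := by
      rw [← StarMul.star_mul, hB, star_smul]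
      rfl
    have hc1 : ((m.1 + (lft N x).1 : ℤ) : ZMod (2 * N)) =
        (((lft N (mb + x)).1 : ℤ) : ZMod (2 * N)) := by
      simp only [lft, Prod.fst_add, hmb]
      push_cast [ZMod.natCast_zmod_val]
      rfl
    have hc2 : ((m.2 + (lft N x).2 : ℤ) : ZMod (2 * N)) =
        (((lft N (mb + x)).2 : ℤ) : ZMod (2 * N)) := by
      simp only [lft, Prod.snd_add, hmb]
      push_cast [ZMod.natCast_zmod_val]
      rfl
    calc Tm N m * (Tm N (lft N x) * X * star (Tm N (Sig a b c d (lft N x)))) *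
          star (Tm N (Sig a b c d m))
        = (Tm N m * Tm N (lft N x)) * X *
            (star (Tm N (Sig a b c d (lft N x))) * star (Tm N (Sig a b c d m))) := by
          noncomm_ring
      _ = (ph N (m.1 * (lft N x).2 - m.2 * (lft N x).1) *
            (starRingEnd ℂ) (ph N (m.1 * (lft N x).2 - m.2 * (lft N x).1))) •
            (Tm N (m.1 + (lft N x).1, m.2 + (lft N x).2) * X *
              star (Tm N (Sig a b c d (m.1 + (lft N x).1, m.2 + (lft N x).2)))) := by
          rw [hA, hstar, Matrix.smul_mul, Matrix.smul_mul, Matrix.mul_smul, smul_smul]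
      _ = Tm N (m.1 + (lft N x).1, m.2 + (lft N x).2) * X *
            star (Tm N (Sig a b c d (m.1 + (lft N x).1, m.2 + (lft N x).2))) := by
          rw [ph_conj, ← ph_add, show (m.1 * (lft N x).2 - m.2 * (lft N x).1) +
            -(m.1 * (lft N x).2 - m.2 * (lft N x).1) = 0 by ring, ph_zero, one_smul]
      _ = Tm N (lft N (mb + x)) * X * star (Tm N (Sig a b c d (lft N (mb + x)))) := by
          rw [Tm_congr N hc1 hc2, Tm_Sig_congr N a b c d hc1 hc2]
  have h1 : star (Tm N (Sig a b c d m)) * Tm N (Sig a b c d m) = 1 := Tm_star_mul N _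
  calc Tm N m * Sop N a b c d X
      = Tm N m * Sop N a b c d X * (star (Tm N (Sig a b c d m)) * Tm N (Sig a b c d m)) := by
        rw [h1, mul_one]
    _ = (Tm N m * Sop N a b c d X * star (Tm N (Sig a b c d m))) * Tm N (Sig a b c d m) := by
        noncomm_ring
    _ = Sop N a b c d X * Tm N (Sig a b c d m) := by rw [key]
lemma trace_Tm (n : ℤ × ℤ) :
    Matrix.trace (Tm N n) =
      if (N : ℤ) ∣ n.1 ∧ (N : ℤ) ∣ n.2 then ph N (n.1 * n.2) * N else 0 := by
  rw [Matrix.trace]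
  by_cases h1 : (N : ℤ) ∣ n.1
  · have hc : ((n.1 : ZMod N)) = 0 := (ZMod.intCast_zmod_eq_zero_iff_dvd n.1 N).mpr h1
    have hdiag : ∀ Q : ZMod N, Matrix.diag (Tm N n) Q = ph N (n.1 * n.2 + 2 * n.2 * (Q.val : ℤ)) := by
      intro Q
      simp only [Matrix.diag, Tm, hc, add_zero, eq_self_iff_true, if_true]
    by_cases h2 : (N : ℤ) ∣ n.2
    · rw [if_pos ⟨h1, h2⟩]
      obtain ⟨e, he⟩ := h2
      have : ∀ Q : ZMod N, Matrix.diag (Tm N n) Q = ph N (n.1 * n.2) := by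
        intro Q
        rw [hdiag Q]
        apply ph_congr
        exact ⟨e * (Q.val : ℤ), by rw [he]; ring⟩
      rw [Finset.sum_congr rfl (fun Q _ => this Q), Finset.sum_const, Finset.card_univ, ZMod.card]
      simp [mul_comm]
    · rw [if_neg (fun hh => h2 hh.2)]
      have : ∀ Q : ZMod N, Matrix.diag (Tm N n) Q =
          ph N (n.1 * n.2) * ph N (2 * n.2 * (Q.val : ℤ)) := by
        intro Q
        rw [hdiag Q, ph_add]
      rw [Finset.sum_congr rfl (fun Q _ => this Q), ← Finset.mul_sum]
      have hs : ∑ Q : ZMod N, ph N (2 * n.2 * (Q.val : ℤ)) = 0 := by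
        rw [sum_val (fun q => ph N (2 * n.2 * (q : ℤ)))]
        exact sum_ph N n.2 h2 N ⟨1, by ring⟩
      rw [hs, mul_zero]
  · rw [if_neg (fun hh => h1 hh.1)]
    have : ∀ Q : ZMod N, Matrix.diag (Tm N n) Q = 0 := by
      intro Q
      simp only [Matrix.diag, Tm]
      rw [if_neg]
      intro hh
      apply h1
      rw [← ZMod.intCast_zmod_eq_zero_iff_dvd]
      exact (left_eq_add.mp hh)
    rw [Finset.sum_congr rfl (fun Q _ => this Q), Finset.sum_const, smul_zero]

lemma val_N_dvd_iff (u : ZMod (2 * N)) :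
    (N : ℤ) ∣ (u.val : ℤ) ↔ u = 0 ∨ u = (N : ZMod (2 * N)) := by
  constructor
  · intro h
    have hN : N ∣ u.val := Int.ofNat_dvd.mp h
    obtain ⟨e, he⟩ := hN
    have hlt : u.val < 2 * N := ZMod.val_lt u
    have he2 : e < 2 := by
      by_contra hge
      push_neg at hge
      have : 2 * N ≤ N * e := Nat.mul_le_mul_left N hge |>.trans_eq' (by ring)
      omega
    interval_cases e
    · left
      rw [← ZMod.natCast_zmod_val u, he]
      simp
    · right
      rw [← ZMod.natCast_zmod_val u, he]
      simp
  · rintro (rfl | rfl)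
    · simp
    · rw [ZMod.val_natCast_of_lt (by have := NeZero.ne N; omega : N < 2 * N)]

lemma NZ_ne : ((N : ZMod (2 * N))) ≠ 0 := by
  intro h
  obtain ⟨k, hk⟩ := (ZMod.natCast_eq_zero_iff N (2 * N)).mp h
  have hN := NeZero.ne N
  rcases Nat.eq_zero_or_pos k with rfl | hp
  · simp at hk; exact hN hk
  · have h1 : 2 * N ≤ 2 * N * k := Nat.le_mul_of_pos_right _ hp
    have h2 : 2 * N ≤ N := h1.trans_eq hk.symm
    omega

lemma tau_eq (hdet : a * d - b * c = 1) (hab : 2 ∣ a * b) (hcd : 2 ∣ c * d) :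
    ∑ x : ZMod (2 * N) × ZMod (2 * N),
        Matrix.trace (Tm N (lft N x)) *
          (starRingEnd ℂ) (Matrix.trace (Tm N (Sig a b c d (lft N x))))
      = (4 * N ^ 2 : ℂ) := by
  have hN := NeZero.ne N
  obtain ⟨e, he⟩ := hab
  obtain ⟨f, hf⟩ := hcd
  set s : Finset (ZMod (2 * N) × ZMod (2 * N)) :=
    ({0, (N : ZMod (2 * N))} : Finset (ZMod (2 * N))) ×ˢ
      ({0, (N : ZMod (2 * N))} : Finset (ZMod (2 * N))) with hs
  have hvanish : ∀ x ∈ (Finset.univ : Finset (ZMod (2 * N) × ZMod (2 * N))), x ∉ s →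
      Matrix.trace (Tm N (lft N x)) *
        (starRingEnd ℂ) (Matrix.trace (Tm N (Sig a b c d (lft N x)))) = 0 := by
    intro x _ hx
    rw [trace_Tm, if_neg, zero_mul]
    intro hd
    apply hx
    rw [hs, Finset.mem_product]
    constructor
    · rcases (val_N_dvd_iff N x.1).mp hd.1 with h | h <;> simp [h]
    · rcases (val_N_dvd_iff N x.2).mp hd.2 with h | h <;> simp [h]
  rw [← Finset.sum_subset (Finset.subset_univ s) hvanish, hs, Finset.sum_product]
  have h0N : (0 : ZMod (2 * N)) ∉ ({(N : ZMod (2 * N))} : Finset (ZMod (2 * N))) := by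
    simp [Ne.symm (NZ_ne N)]
  have hval0 : ((0 : ZMod (2 * N))).val = 0 := ZMod.val_zero
  have hvalN : ((N : ZMod (2 * N))).val = N := ZMod.val_natCast_of_lt (by omega)
  rw [Finset.sum_insert h0N, Finset.sum_singleton, Finset.sum_insert h0N,
    Finset.sum_insert h0N, Finset.sum_singleton, Finset.sum_singleton]
  have htr : ∀ p q : ℤ, (N : ℤ) ∣ p → (N : ℤ) ∣ q →
      Matrix.trace (Tm N (p, q)) = ph N (p * q) * N := by
    intro p q h1 h2
    rw [trace_Tm, if_pos ⟨h1, h2⟩]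
  have hlft : ∀ u v : ZMod (2 * N), lft N (u, v) = ((u.val : ℤ), (v.val : ℤ)) := fun u v => rfl
  simp only [hlft, hval0, hvalN, Nat.cast_zero, Nat.cast_ofNat, Sig]
  have d0 : (N : ℤ) ∣ 0 := dvd_zero _
  have dN : (N : ℤ) ∣ (N : ℤ) := dvd_refl _
  have dNa : ∀ t : ℤ, (N : ℤ) ∣ (N : ℤ) * t := fun t => Dvd.intro t rfl
  -- evaluate all four terms
  rw [htr 0 0 d0 d0]
  rw [show ((0 : ℤ) * a + (N : ℤ) * c, (0 : ℤ) * b + (N : ℤ) * d) = ((N : ℤ) * c, (N : ℤ) * d) by norm_num]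
  rw [show ((0 : ℤ) * a + (0 : ℤ) * c, (0 : ℤ) * b + (0 : ℤ) * d) = ((0 : ℤ), (0 : ℤ)) by norm_num]
  rw [show ((N : ℤ) * a + (0 : ℤ) * c, (N : ℤ) * b + (0 : ℤ) * d) = ((N : ℤ) * a, (N : ℤ) * b) by norm_num]
  rw [htr 0 (N : ℤ) d0 dN, htr (N : ℤ) 0 dN d0, htr (N : ℤ) (N : ℤ) dN dN,
    htr 0 0 d0 d0, htr ((N : ℤ) * c) ((N : ℤ) * d) (dNa c) (dNa d),
    htr ((N : ℤ) * a) ((N : ℤ) * b) (dNa a) (dNa b),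
    htr ((N : ℤ) * a + (N : ℤ) * c) ((N : ℤ) * b + (N : ℤ) * d)
      (Dvd.dvd.add (dNa a) (dNa c)) (Dvd.dvd.add (dNa b) (dNa d))]
  rw [show ((0 : ℤ) * 0) = 0 by ring, show ((0 : ℤ) * (N : ℤ)) = 0 by ring,
    show (((N : ℤ)) * 0) = 0 by ring, ph_zero]
  have hcd1 : ph N ((N : ℤ) * c * ((N : ℤ) * d)) = 1 :=
    ph_dvd N _ ⟨(N : ℤ) * f, by linear_combination (N : ℤ) * (N : ℤ) * hf⟩
  have hab1 : ph N ((N : ℤ) * a * ((N : ℤ) * b)) = 1 :=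
    ph_dvd N _ ⟨(N : ℤ) * e, by linear_combination (N : ℤ) * (N : ℤ) * he⟩
  rw [hcd1, hab1]
  have hbig : ph N ((N : ℤ) * (N : ℤ)) *
      (starRingEnd ℂ) (ph N (((N : ℤ) * a + (N : ℤ) * c) * ((N : ℤ) * b + (N : ℤ) * d))) = 1 := by
    rw [ph_conj, ← ph_add]
    apply ph_dvd
    refine ⟨(N : ℤ) * (-e - b * c - f), ?_⟩
    linear_combination (-(N : ℤ) * (N : ℤ)) * hdet + (-(N : ℤ) * (N : ℤ)) * he + (-(N : ℤ) * (N : ℤ)) * hf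
  have hconjN : (starRingEnd ℂ) ((N : ℂ)) = (N : ℂ) := by
    exact map_natCast _ _
  calc (1 : ℂ) * N * (starRingEnd ℂ) (1 * N) + 1 * N * (starRingEnd ℂ) (1 * N) +
        (1 * N * (starRingEnd ℂ) (1 * N) +
          ph N ((N : ℤ) * (N : ℤ)) * N *
            (starRingEnd ℂ) (ph N (((N : ℤ) * a + (N : ℤ) * c) * ((N : ℤ) * b + (N : ℤ) * d)) * N))
      = 3 * ((N : ℂ) * N) + (ph N ((N : ℤ) * (N : ℤ)) *
          (starRingEnd ℂ) (ph N (((N : ℤ) * a + (N : ℤ) * c) * ((N : ℤ) * b + (N : ℤ) * d)))) *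
            ((N : ℂ) * N) := by
        simp only [one_mul, _root_.map_mul, hconjN, _root_.map_one]
        ring
    _ = (4 * N ^ 2 : ℂ) := by rw [hbig]; ring
noncomputable def Emat (P Q : ZMod N) : Matrix (ZMod N) (ZMod N) ℂ :=
  fun i j => if i = P ∧ j = Q then 1 else 0

lemma sandwich (A B : Matrix (ZMod N) (ZMod N) ℂ) (P Q : ZMod N) :
    (A * Emat N P Q * B) P Q = A P P * B Q Q := by
  rw [Matrix.mul_apply, Finset.sum_eq_single Q]
  · have h1 : (A * Emat N P Q) P Q = A P P := by
      rw [Matrix.mul_apply, Finset.sum_eq_single P]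
      · simp [Emat]
      · intro R _ hR; simp [Emat, hR]
      · intro h; exact absurd (Finset.mem_univ _) h
    rw [h1]
  · intro R _ hR
    have h2 : (A * Emat N P Q) P R = 0 := by
      rw [Matrix.mul_apply]
      apply Finset.sum_eq_zero
      intro S _
      simp [Emat, hR]
    rw [h2, zero_mul]
  · intro h; exact absurd (Finset.mem_univ _) h

lemma exists_X (hdet : a * d - b * c = 1) (hab : 2 ∣ a * b) (hcd : 2 ∣ c * d) :
    ∃ X : Matrix (ZMod N) (ZMod N) ℂ, Sop N a b c d X ≠ 0 := by
  by_contra h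
  push_neg at h
  have htau := tau_eq N a b c d hdet hab hcd
  have hA : ∀ x : ZMod (2 * N) × ZMod (2 * N),
      Matrix.trace (Tm N (lft N x)) *
        (starRingEnd ℂ) (Matrix.trace (Tm N (Sig a b c d (lft N x))))
      = ∑ P : ZMod N, ∑ Q : ZMod N,
          Tm N (lft N x) P P * star (Tm N (Sig a b c d (lft N x))) Q Q := by
    intro x
    rw [Matrix.trace, Matrix.trace, map_sum, Finset.sum_mul_sum]
    apply Finset.sum_congr rfl; intro P _
    apply Finset.sum_congr rfl; intro Q _
    rw [Matrix.diag_apply, Matrix.diag_apply, Matrix.star_apply]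
    rfl
  rw [Finset.sum_congr rfl (fun x _ => hA x), Finset.sum_comm] at htau
  have hB : ∀ P : ZMod N, ∑ x : ZMod (2 * N) × ZMod (2 * N), ∑ Q : ZMod N,
      Tm N (lft N x) P P * star (Tm N (Sig a b c d (lft N x))) Q Q
      = ∑ Q : ZMod N, ∑ x : ZMod (2 * N) × ZMod (2 * N),
          Tm N (lft N x) P P * star (Tm N (Sig a b c d (lft N x))) Q Q := by
    intro P
    exact Finset.sum_comm
  rw [Finset.sum_congr rfl (fun P _ => hB P)] at htau
  have hC : ∀ P Q : ZMod N, ∑ x : ZMod (2 * N) × ZMod (2 * N),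
      Tm N (lft N x) P P * star (Tm N (Sig a b c d (lft N x))) Q Q = 0 := by
    intro P Q
    have h1 : ∀ x : ZMod (2 * N) × ZMod (2 * N),
        Tm N (lft N x) P P * star (Tm N (Sig a b c d (lft N x))) Q Q
        = (Tm N (lft N x) * Emat N P Q * star (Tm N (Sig a b c d (lft N x)))) P Q := by
      intro x; rw [sandwich]
    rw [Finset.sum_congr rfl (fun x _ => h1 x), ← Matrix.sum_apply, ← Sop, h (Emat N P Q)]
    rfl
  rw [Finset.sum_congr rfl (fun P _ => Finset.sum_congr rfl (fun Q _ => hC P Q))] at htau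
  simp only [Finset.sum_const_zero] at htau
  have hN := NeZero.ne N
  have hNc : ((N : ℂ)) ≠ 0 := Nat.cast_ne_zero.mpr hN
  exact (mul_ne_zero (by norm_num : (4 : ℂ) ≠ 0) (pow_ne_zero 2 hNc)) htau.symm

end Prop1

/-- for `A = [[a,b],[c,d]] ∈ SL(2,ℤ)` with `ab ≡ cd ≡ 0 (mod 2)`, there exists
a unitary operator `U` on `H_N` (the quantum propagator) with
`U⁻¹ T_N(n) U = T_N(nA)` for all `n ∈ ℤ²`, where `nA = (n₁a + n₂c, n₁b + n₂d)`.
Since `U` is unitary, `U⁻¹ = star U`. -/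
theorem exists_propagator (N : ℕ) [NeZero N] (a b c d : ℤ)
    (hdet : a * d - b * c = 1) (hab : 2 ∣ a * b) (hcd : 2 ∣ c * d) :
    ∃ U : Matrix (ZMod N) (ZMod N) ℂ, U ∈ Matrix.unitaryGroup (ZMod N) ℂ ∧
      ∀ n : ℤ × ℤ,
        star U * Tmat N n * U = Tmat N (n.1 * a + n.2 * c, n.1 * b + n.2 * d) := by
  classical
  obtain ⟨X, hX⟩ := Prop1.exists_X N a b c d hdet hab hcd
  set S := Prop1.Sop N a b c d X with hS
  have hint : ∀ m : ℤ × ℤ, Prop1.Tm N m * S = S * Prop1.Tm N (Prop1.Sig a b c d m) :=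
    fun m => Prop1.intertwine N a b c d hdet X m
  have hstar : ∀ m : ℤ × ℤ,
      Prop1.Tm N (Prop1.Sig a b c d m) * star S = star S * Prop1.Tm N m := by
    intro m
    have h1 := congrArg star (hint (-m.1, -m.2))
    rw [StarMul.star_mul, StarMul.star_mul, Prop1.Tm_star, Prop1.Tm_star] at h1
    have e1 : ((-(-m.1 : ℤ) : ℤ), (-(-m.2 : ℤ) : ℤ)) = m := by
      simp
    have e2 : ((-(Prop1.Sig a b c d ((-m.1 : ℤ), (-m.2 : ℤ))).1 : ℤ),
        (-(Prop1.Sig a b c d ((-m.1 : ℤ), (-m.2 : ℤ))).2 : ℤ)) = Prop1.Sig a b c d m := by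
      simp only [Prop1.Sig, Prod.mk.injEq]
      constructor <;> ring
    rw [e1, e2] at h1
    exact h1.symm
  have hcomm : ∀ m : ℤ × ℤ, Prop1.Tm N m * (S * star S) = (S * star S) * Prop1.Tm N m := by
    intro m
    calc Prop1.Tm N m * (S * star S) = (Prop1.Tm N m * S) * star S := (mul_assoc _ _ _).symm
      _ = S * (Prop1.Tm N (Prop1.Sig a b c d m) * star S) := by rw [hint m, mul_assoc]
      _ = S * (star S * Prop1.Tm N m) := by rw [hstar m]
      _ = (S * star S) * Prop1.Tm N m := (mul_assoc _ _ _).symm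
  have hZ := Prop1.Tm_comm_scalar N (S * star S) hcomm
  have htr : Matrix.trace (S * star S) =
      ((∑ P : ZMod N, ∑ Q : ZMod N, Complex.normSq (S P Q) : ℝ) : ℂ) := by
    rw [Matrix.trace]
    push_cast
    apply Finset.sum_congr rfl; intro P _
    rw [Matrix.diag_apply, Matrix.mul_apply]
    apply Finset.sum_congr rfl; intro Q _
    rw [Matrix.star_apply]
    exact Complex.mul_conj _
  set t : ℝ := ∑ P : ZMod N, ∑ Q : ZMod N, Complex.normSq (S P Q) with ht
  have htpos : 0 < t := by
    have hSne : ∃ P Q, S P Q ≠ 0 := by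
      by_contra hh
      push_neg at hh
      exact hX (by funext P Q; exact hh P Q)
    obtain ⟨P, Q, hPQ⟩ := hSne
    refine Finset.sum_pos' (fun i _ => Finset.sum_nonneg fun j _ => Complex.normSq_nonneg _)
      ⟨P, Finset.mem_univ P, ?_⟩
    exact Finset.sum_pos' (fun j _ => Complex.normSq_nonneg _)
      ⟨Q, Finset.mem_univ Q, Complex.normSq_pos.mpr hPQ⟩
  have hNR : (0 : ℝ) < N := by
    have := NeZero.ne N
    positivity
  set r : ℝ := Real.sqrt (t / N) with hr
  have hrpos : 0 < r := Real.sqrt_pos.mpr (div_pos htpos hNR)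
  set U : Matrix (ZMod N) (ZMod N) ℂ := ((r : ℂ))⁻¹ • S with hU
  have hstarU : star U = ((r : ℂ))⁻¹ • star S := by
    rw [hU, star_smul, star_inv₀]
    congr 1
    rw [Complex.star_def, Complex.conj_ofReal]
  have hcoef : ((r : ℂ))⁻¹ * ((r : ℂ))⁻¹ * (((t : ℝ) : ℂ) / (N : ℂ)) = 1 := by
    have hrr : (r : ℝ) * r = t / N := Real.mul_self_sqrt (le_of_lt (div_pos htpos hNR))
    have hrne : ((r : ℂ)) ≠ 0 := Complex.ofReal_ne_zero.mpr (ne_of_gt hrpos)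
    have h1 : ((r : ℂ)) * (r : ℂ) = ((t : ℝ) : ℂ) / (N : ℂ) := by
      rw [← Complex.ofReal_mul, hrr]
      push_cast
      ring
    calc ((r : ℂ))⁻¹ * ((r : ℂ))⁻¹ * (((t : ℝ) : ℂ) / (N : ℂ))
        = ((r : ℂ))⁻¹ * ((r : ℂ))⁻¹ * (((r : ℂ)) * (r : ℂ)) := by rw [h1]
      _ = 1 := by field_simp
  have hUU : U * star U = 1 := by
    rw [hU, hstarU, Matrix.smul_mul, Matrix.mul_smul, smul_smul, hZ, htr, smul_smul, hcoef, one_smul]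
  have hU1 : star U * U = 1 := mul_eq_one_comm.mp hUU
  refine ⟨U, ⟨hU1, hUU⟩, ?_⟩
  intro n
  rw [Prop1.Tmat_eq, Prop1.Tmat_eq]
  have h3 : Prop1.Tm N n * U = U * Prop1.Tm N (Prop1.Sig a b c d n) := by
    rw [hU, Matrix.mul_smul, Matrix.smul_mul, hint n]
  calc star U * Prop1.Tm N n * U = star U * (Prop1.Tm N n * U) := mul_assoc _ _ _
    _ = star U * (U * Prop1.Tm N (Prop1.Sig a b c d n)) := by rw [h3]
    _ = (star U * U) * Prop1.Tm N (Prop1.Sig a b c d n) := (mul_assoc _ _ _).symm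
    _ = Prop1.Tm N (Prop1.Sig a b c d n) := by rw [hU1, one_mul]
end

section
/- Let R be a commutative ring and let x, y, z, w be invertible elements of R. Then the system of equations x + y = z + w and x⁻¹ + y⁻¹ = z⁻¹ + w⁻¹ holds if and only if the system (z−x)(z−y)(x+y) = 0 and w = x + y − z holds. -/
/-!
Multiplying by the unit `x y z w` turns `x⁻¹ + y⁻¹ = z⁻¹ + w⁻¹` into the polynomial equation
`z w (x + y) = x y (z + w)`. Once `w = x + y - z`, this factors as `(z - x)(z - y)(x + y) = 0`.
-/

namespace Ring

variable {R : Type*} [CommRing R]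

theorem mul_mul_inverse_add_inverse {a b : R} (ha : IsUnit a) (hb : IsUnit b) :
    a * b * (inverse a + inverse b) = a + b := by
  linear_combination b * mul_inverse_cancel a ha + a * mul_inverse_cancel b hb

theorem inverse_add_inverse_eq_iff {x y z w : R} (hx : IsUnit x) (hy : IsUnit y)
    (hz : IsUnit z) (hw : IsUnit w) :
    inverse x + inverse y = inverse z + inverse w ↔ z * w * (x + y) = x * y * (z + w) := by
  have hxy : x * y * z * w * (inverse x + inverse y) = z * w * (x + y) := by
    linear_combination z * w * mul_mul_inverse_add_inverse hx hy
  have hzw : x * y * z * w * (inverse z + inverse w) = x * y * (z + w) := by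
    linear_combination x * y * mul_mul_inverse_add_inverse hz hw
  rw [← (((hx.mul hy).mul hz).mul hw).mul_right_inj, hxy, hzw]

end Ring

theorem mul_mul_add_eq_mul_mul_add_iff_of_eq_add_sub {R : Type*} [CommRing R] {x y z w : R}
    (hw : w = x + y - z) :
    z * w * (x + y) = x * y * (z + w) ↔ (z - x) * (z - y) * (x + y) = 0 := by
  subst hw
  constructor <;> intro h <;> linear_combination -h

/-- in a commutative ring, for invertible `x, y, z, w`, the system
`x + y = z + w`, `x⁻¹ + y⁻¹ = z⁻¹ + w⁻¹` is equivalent to the system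
`(z - x)(z - y)(x + y) = 0`, `w = x + y - z`. -/
theorem system_equiv {R : Type*} [CommRing R] (x y z w : R)
    (hx : IsUnit x) (hy : IsUnit y) (hz : IsUnit z) (hw : IsUnit w) :
    (x + y = z + w ∧
        Ring.inverse x + Ring.inverse y = Ring.inverse z + Ring.inverse w) ↔
      ((z - x) * (z - y) * (x + y) = 0 ∧ w = x + y - z) := by
  have hsum : x + y = z + w ↔ w = x + y - z := by rw [eq_sub_iff_add_eq', eq_comm]
  rw [hsum, Ring.inverse_add_inverse_eq_iff hx hy hz hw]
  exact and_comm.trans (and_congr_left mul_mul_add_eq_mul_mul_add_iff_of_eq_add_sub)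
end

section
/- Let p be a prime that is inert in K, i.e. the ideal p·O_K is a prime ideal of O_K. Then for every integer k ≥ 1, the number of norm-one residues in O_K/p^k·O_K equals (p+1)·p^{k−1}. -/
open NumberField

variable (K : Type*) [Field K] [NumberField K]
set_option linter.unusedSectionVars false
set_option linter.unusedVariables false
set_option maxHeartbeats 1000000

theorem matEntry_intCast (m : ℤ) (i j : Fin 2) :
    ((m : ℤ) : Matrix (Fin 2) (Fin 2) ℤ) i j = if i = j then m else 0 := by
  rw [← Matrix.diagonal_intCast]; simp [Matrix.diagonal_apply]

section aux
variable {R : Type*} [CommRing R] [IsDomain R] [IsDedekindDomain R] [CharZero R]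
  [Module.Free ℤ R] [Module.Finite ℤ R]
  (B : Module.Basis (Fin 2) ℤ R) (p : ℕ) (hp : p.Prime)
  (hinert : (Ideal.span {(p : R)}).IsPrime)

-- assume from part 1:
include B in
theorem aux_norm_int' (n : ℤ) : Algebra.norm ℤ (algebraMap ℤ R n) = n ^ 2 := by
  rw [Algebra.norm_eq_matrix_det B, (Algebra.leftMulMatrix B).commutes]
  simp [Matrix.det_fin_two, matEntry_intCast]; ring

include hp in
theorem aux_P_ne_bot : Ideal.span {(p : R)} ≠ ⊥ := by
  simp only [ne_eq, Ideal.span_singleton_eq_bot]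
  exact Nat.cast_ne_zero.mpr hp.ne_zero

include hp hinert in
theorem aux_P_max : (Ideal.span {(p : R)}).IsMaximal :=
  hinert.isMaximal (aux_P_ne_bot p hp)

include B hp in
theorem aux_cardF : Nat.card (R ⧸ Ideal.span {(p : R)}) = p ^ 2 := by
  have h1 : Ideal.absNorm (Ideal.span {(p:R)}) = p ^ 2 := by
    rw [Ideal.absNorm_span_singleton]
    have : ((p : ℕ) : R) = algebraMap ℤ R ((p:ℕ) : ℤ) := by simp
    rw [this, aux_norm_int' B]
    simp [Int.natAbs_pow]
  rw [Ideal.absNorm_apply, Submodule.cardQuot_apply] at h1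
  exact h1

include B hp in
theorem aux_finF : Finite (R ⧸ Ideal.span {(p : R)}) := by
  have hpos : 0 < Nat.card (R ⧸ Ideal.span {(p : R)}) := by
    rw [aux_cardF B p hp]; exact pow_pos hp.pos 2
  exact (Nat.card_pos_iff.mp hpos).2

include hp hinert in
theorem aux_charF : CharP (R ⧸ Ideal.span {(p : R)}) p := by
  haveI : Nontrivial (R ⧸ Ideal.span {(p : R)}) :=
    Ideal.Quotient.nontrivial_iff.mpr (by
      intro h
      exact hinert.ne_top h)
  rw [CharP.charP_iff_prime_eq_zero hp]
  have : ((p : ℕ) : R ⧸ Ideal.span {(p : R)}) = Ideal.Quotient.mk _ ((p:ℕ) : R) := by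
    push_cast; rfl
  rw [this, Ideal.Quotient.eq_zero_iff_mem]
  exact Ideal.mem_span_singleton_self _


include B in
theorem aux_CH (b : R) :
    b * (algebraMap ℤ R ((Algebra.leftMulMatrix B b).trace) - b)
      = algebraMap ℤ R (Algebra.norm ℤ b) := by
  apply Algebra.leftMulMatrix_injective B
  have hA : ∀ (t : ℤ), (Algebra.leftMulMatrix B) (algebraMap ℤ R t) = algebraMap ℤ _ t :=
    fun t => (Algebra.leftMulMatrix B).commutes t
  rw [map_mul, map_sub, hA, hA, Algebra.norm_eq_matrix_det B]
  ext i j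
  fin_cases i <;> fin_cases j <;>
    simp [Matrix.mul_apply, Fin.sum_univ_two, matEntry_intCast,
      Matrix.trace_fin_two, Matrix.det_fin_two] <;> ring

-- ℤ-cast into the quotient via mk ∘ algebraMap
theorem aux_mk_algebraMap (I : Ideal R) (m : ℤ) :
    Ideal.Quotient.mk I (algebraMap ℤ R m) = (m : R ⧸ I) := by
  have := eq_intCast ((Ideal.Quotient.mk I).comp (algebraMap ℤ R)) m
  simpa using this

include hp hinert in
theorem aux_mem_primefield (x : R ⧸ Ideal.span {(p : R)}) (hx : x ^ p = x) :
    ∃ m : ℤ, ((m : ℤ) : R ⧸ Ideal.span {(p : R)}) = x := by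
  classical
  haveI : Fact p.Prime := ⟨hp⟩
  haveI : (Ideal.span {(p : R)}).IsPrime := hinert
  haveI : CharP (R ⧸ Ideal.span {(p : R)}) p := aux_charF p hp hinert
  set φ : ZMod p →+* (R ⧸ Ideal.span {(p : R)}) :=
    ZMod.castHom (dvd_refl p) (R ⧸ Ideal.span {(p : R)}) with hφ
  by_contra hcon
  push_neg at hcon
  set g : Polynomial (R ⧸ Ideal.span {(p : R)}) := Polynomial.X ^ p - Polynomial.X with hg
  have hg0 : g ≠ 0 := by
    intro h
    have h1 : g.coeff p = 1 := by
      simp [hg, Polynomial.coeff_X_pow, Polynomial.coeff_X, hp.ne_one,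
        (Nat.lt_of_lt_of_le one_lt_two hp.two_le).ne']
      exact hp.one_lt.ne
    rw [h] at h1
    simp at h1
  have hdeg : g.natDegree ≤ p := by
    refine le_trans (Polynomial.natDegree_sub_le _ _) ?_
    simp [Polynomial.natDegree_X_pow, Polynomial.natDegree_X, hp.one_lt.le]
  set T : Finset (R ⧸ Ideal.span {(p : R)}) := Finset.univ.image φ with hT
  have hTcard : T.card = p := by
    rw [hT, Finset.card_image_of_injective _ (φ.injective)]
    simp [ZMod.card]
  have hxT : x ∉ T := by
    intro hmem
    rw [hT, Finset.mem_image] at hmem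
    obtain ⟨m, _, hm⟩ := hmem
    obtain ⟨m0, hm0⟩ := ZMod.intCast_surjective (n := p) m
    refine hcon m0 ?_
    rw [← hm, ← hm0, map_intCast]
  have hroots : ∀ y ∈ insert x T, y ∈ g.roots.toFinset := by
    intro y hy
    rw [Multiset.mem_toFinset, Polynomial.mem_roots hg0]
    rw [Finset.mem_insert] at hy
    rcases hy with rfl | hyT
    · simp [hg, Polynomial.IsRoot, hx]
    · rw [hT, Finset.mem_image] at hyT
      obtain ⟨m, _, hm⟩ := hyT
      subst hm
      simp [hg, Polynomial.IsRoot, ← map_pow, ZMod.pow_card]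
  have hcard : p + 1 ≤ g.roots.toFinset.card := by
    have h1 : (insert x T).card = p + 1 := by
      rw [Finset.card_insert_of_notMem hxT, hTcard]
    rw [← h1]
    exact Finset.card_le_card (fun y hy => hroots y hy)
  have h2 : g.roots.toFinset.card ≤ p :=
    le_trans (Multiset.toFinset_card_le _) (le_trans (Polynomial.card_roots' g) hdeg)
  omega

theorem aux_trace_scalar (m : ℤ) :
    (algebraMap ℤ (Matrix (Fin 2) (Fin 2) ℤ) m).trace = 2 * m := by
  rw [Matrix.algebraMap_eq_diagonal]
  simp [Matrix.trace_fin_two, matEntry_intCast]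

include B hp hinert in
theorem aux_conj (b : R) :
    (Ideal.Quotient.mk (Ideal.span {(p : R)}) b) ^ p
      = Ideal.Quotient.mk (Ideal.span {(p : R)})
          (algebraMap ℤ R ((Algebra.leftMulMatrix B b).trace) - b) := by
  classical
  haveI : Fact p.Prime := ⟨hp⟩
  haveI : (Ideal.span {(p : R)}).IsPrime := hinert
  haveI : CharP (R ⧸ Ideal.span {(p : R)}) p := aux_charF p hp hinert
  set φ : ZMod p →+* (R ⧸ Ideal.span {(p : R)}) :=
    ZMod.castHom (dvd_refl p) (R ⧸ Ideal.span {(p : R)}) with hφ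
  set β := Ideal.Quotient.mk (Ideal.span {(p : R)}) b with hβ
  set t : ℤ := (Algebra.leftMulMatrix B b).trace with htdef
  set n : ℤ := Algebra.norm ℤ b with hndef
  have hcast_pow : ∀ m : ℤ, ((m : ℤ) : R ⧸ Ideal.span {(p : R)}) ^ p
      = ((m : ℤ) : R ⧸ Ideal.span {(p : R)}) := by
    intro m
    rw [← map_intCast φ m, ← map_pow, ZMod.pow_card]
  have h1 : β * (((t : ℤ) : R ⧸ Ideal.span {(p : R)}) - β)
      = ((n : ℤ) : R ⧸ Ideal.span {(p : R)}) := by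
    have h := congrArg (Ideal.Quotient.mk (Ideal.span {(p : R)})) (aux_CH B b)
    rw [map_mul, map_sub, aux_mk_algebraMap, aux_mk_algebraMap] at h
    exact h
  have hq : β ^ 2 = ((t : ℤ) : R ⧸ Ideal.span {(p : R)}) * β
      - ((n : ℤ) : R ⧸ Ideal.span {(p : R)}) := by linear_combination -h1
  have hqp : (β ^ p) ^ 2 = ((t : ℤ) : R ⧸ Ideal.span {(p : R)}) * β ^ p
      - ((n : ℤ) : R ⧸ Ideal.span {(p : R)}) := by
    have h2 : (β ^ p) ^ 2 = (β ^ 2) ^ p := by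
      rw [← pow_mul, ← pow_mul, Nat.mul_comm]
    rw [h2, hq, sub_pow_char, mul_pow, hcast_pow, hcast_pow]
  have factor : (β ^ p - β) * (β ^ p - (((t : ℤ) : R ⧸ Ideal.span {(p : R)}) - β)) = 0 := by
    linear_combination hqp - hq
  rw [map_sub, aux_mk_algebraMap]
  rcases mul_eq_zero.mp factor with h | h
  · have hβp : β ^ p = β := by linear_combination h
    obtain ⟨m, hm⟩ := aux_mem_primefield p hp hinert β hβp
    have hmem : b - algebraMap ℤ R m ∈ Ideal.span {(p : R)} := by
      rw [← Ideal.Quotient.eq, aux_mk_algebraMap, hm]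
    obtain ⟨r, hr⟩ := Ideal.mem_span_singleton'.mp hmem
    have hpR : (p : R) = algebraMap ℤ R (p : ℤ) := by simp
    have hb : b = algebraMap ℤ R m + algebraMap ℤ R (p : ℤ) * r := by
      rw [← hpR]
      linear_combination -hr
    have htr : t = 2 * m + (p : ℤ) * (Algebra.leftMulMatrix B r).trace := by
      rw [htdef, hb, map_add, map_mul, (Algebra.leftMulMatrix B).commutes,
        (Algebra.leftMulMatrix B).commutes,
        Matrix.trace_add, ← Algebra.smul_def, Matrix.trace_smul, aux_trace_scalar]
      simp
    have ht : ((t : ℤ) : R ⧸ Ideal.span {(p : R)})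
        = 2 * ((m : ℤ) : R ⧸ Ideal.span {(p : R)}) := by
      rw [htr]
      push_cast
      have hp0 : ((p : ℕ) : R ⧸ Ideal.span {(p : R)}) = 0 := CharP.cast_eq_zero _ p
      rw [hp0]
      ring
    rw [ht, hm, hβp]
    ring
  · linear_combination h


include B in
theorem aux_norm_mod (M : ℤ) (b x : R) :
    M ∣ Algebra.norm ℤ (b + algebraMap ℤ R M * x) - Algebra.norm ℤ b := by
  rw [Algebra.norm_eq_matrix_det B, Algebra.norm_eq_matrix_det B]
  set A := Algebra.leftMulMatrix B b with hA
  set C := Algebra.leftMulMatrix B x with hC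
  have h : Algebra.leftMulMatrix B (b + algebraMap ℤ R M * x)
      = A + algebraMap ℤ _ M * C := by
    rw [map_add, map_mul, (Algebra.leftMulMatrix B).commutes]
  rw [h]
  have he : ∀ i j, (A + algebraMap ℤ (Matrix (Fin 2) (Fin 2) ℤ) M * C) i j
      = A i j + M * C i j := by
    intro i j
    simp [Matrix.mul_apply, Fin.sum_univ_two, matEntry_intCast, ite_mul]
  rw [Matrix.det_fin_two, Matrix.det_fin_two, he, he, he, he]
  refine ⟨A 0 0 * C 1 1 + C 0 0 * A 1 1 + M * C 0 0 * C 1 1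
    - A 0 1 * C 1 0 - C 0 1 * A 1 0 - M * C 0 1 * C 1 0, by ring⟩

include B in
theorem aux_norm_one_add (c : ℤ) (s : R) :
    Algebra.norm ℤ (1 + algebraMap ℤ R c * s)
      = 1 + c * (Algebra.leftMulMatrix B s).trace + c ^ 2 * Algebra.norm ℤ s := by
  rw [Algebra.norm_eq_matrix_det B, Algebra.norm_eq_matrix_det B]
  set C := Algebra.leftMulMatrix B s with hC
  have h : Algebra.leftMulMatrix B (1 + algebraMap ℤ R c * s)
      = 1 + algebraMap ℤ _ c * C := by
    rw [map_add, map_one, map_mul, (Algebra.leftMulMatrix B).commutes]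
  rw [h]
  have he : ∀ i j, (1 + algebraMap ℤ (Matrix (Fin 2) (Fin 2) ℤ) c * C) i j
      = (if i = j then 1 else 0) + c * C i j := by
    intro i j
    simp [Matrix.mul_apply, Fin.sum_univ_two, matEntry_intCast, Matrix.one_apply, ite_mul]
  rw [Matrix.det_fin_two C, Matrix.det_fin_two, Matrix.trace_fin_two, he, he, he, he]
  simp
  ring

include B in
theorem aux_dvd_transfer (M n : ℤ) (h : algebraMap ℤ R M ∣ algebraMap ℤ R n) :
    M ∣ n := by
  obtain ⟨r, hr⟩ := h
  have h1 := congrArg (Algebra.norm ℤ) hr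
  rw [map_mul, aux_norm_int' B, aux_norm_int' B] at h1
  have h2 : M ^ 2 ∣ n ^ 2 := ⟨_, h1⟩
  exact (Int.pow_dvd_pow_iff (two_ne_zero)).mp h2

include B hp hinert in
theorem aux_traceSurj : ∃ s : R, ¬ ((p : ℤ) ∣ (Algebra.leftMulMatrix B s).trace) := by
  classical
  by_cases hp2 : p = 2
  · subst hp2
    by_contra hall
    push_neg at hall
    haveI : Fact (Nat.Prime 2) := ⟨hp⟩
    haveI : (Ideal.span {((2:ℕ) : R)}).IsPrime := hinert
    haveI hQfin : Finite (R ⧸ Ideal.span {((2:ℕ) : R)}) := aux_finF B 2 hp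
    haveI : CharP (R ⧸ Ideal.span {((2:ℕ) : R)}) 2 := aux_charF 2 hp hinert
    set φ : ZMod 2 →+* (R ⧸ Ideal.span {((2:ℕ) : R)}) :=
      ZMod.castHom (dvd_refl 2) (R ⧸ Ideal.span {((2:ℕ) : R)}) with hφ
    have h20 : ((2 : ℕ) : R ⧸ Ideal.span {((2:ℕ) : R)}) = 0 := CharP.cast_eq_zero _ 2
    have hsq : ∀ x : R ⧸ Ideal.span {((2:ℕ) : R)}, ∃ m : ZMod 2, φ m = x * x := by
      intro x
      obtain ⟨b, rfl⟩ := Ideal.Quotient.mk_surjective x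
      have h1 := congrArg (Ideal.Quotient.mk (Ideal.span {((2:ℕ) : R)})) (aux_CH B b)
      rw [map_mul, map_sub, aux_mk_algebraMap, aux_mk_algebraMap] at h1
      obtain ⟨c, hc⟩ := hall b
      have ht0 : (((Algebra.leftMulMatrix B b).trace : ℤ)
          : R ⧸ Ideal.span {((2:ℕ) : R)}) = 0 := by
        rw [hc]
        push_cast
        have h2' : (2 : R ⧸ Ideal.span {((2:ℕ) : R)}) = 0 := by exact_mod_cast h20
        rw [h2']
        ring
      refine ⟨((- Algebra.norm ℤ b : ℤ) : ZMod 2), ?_⟩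
      rw [map_intCast]
      push_cast
      rw [ht0] at h1
      linear_combination h1
    have hinj : ∀ x y : R ⧸ Ideal.span {((2:ℕ) : R)}, x * x = y * y → x = y := by
      intro x y hxy
      have h2Q : ((2:ℕ) : R ⧸ Ideal.span {((2:ℕ) : R)}) = 0 := h20
      have : (x - y) * (x - y) = 0 := by
        push_cast at h2Q
        linear_combination hxy + (y * y - x * y) * h2Q
      exact sub_eq_zero.mp (mul_self_eq_zero.mp this)
    -- cardinality contradiction
    have hcard4 : Nat.card (R ⧸ Ideal.span {((2:ℕ) : R)}) = 4 := by
      rw [aux_cardF B 2 hp]; norm_num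
    set f : (R ⧸ Ideal.span {((2:ℕ) : R)}) → Set.range φ :=
      fun x => ⟨x * x, by obtain ⟨m, hm⟩ := hsq x; exact ⟨m, hm⟩⟩ with hf
    have hfinj : Function.Injective f := by
      intro x y hxy
      apply hinj
      have := congrArg Subtype.val hxy
      simpa [hf] using this
    have hle : Nat.card (R ⧸ Ideal.span {((2:ℕ) : R)}) ≤ Nat.card (Set.range φ) :=
      Nat.card_le_card_of_injective f hfinj
    have hle2 : Nat.card (Set.range φ) ≤ Nat.card (ZMod 2) :=
      Nat.card_le_card_of_surjective (Set.rangeFactorization φ) Set.rangeFactorization_surjective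
    have hz2 : Nat.card (ZMod 2) = 2 := by
      rw [Nat.card_eq_fintype_card, ZMod.card]
    omega
  · refine ⟨1, ?_⟩
    rw [map_one, Matrix.trace_one]
    intro hdvd
    have h2 : (p : ℤ) ∣ ((2:ℕ) : ℤ) := by simpa using hdvd
    have : p ∣ 2 := by exact_mod_cast h2
    exact hp2 ((Nat.prime_dvd_prime_iff_eq hp Nat.prime_two).mp this)

include B hp hinert in
theorem aux_base_surj (u : ℤ) (hu : ¬((p : ℤ) ∣ u)) :
    ∃ b : R, (p : ℤ) ∣ Algebra.norm ℤ b - u := by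
  classical
  haveI : Fact p.Prime := ⟨hp⟩
  haveI : (Ideal.span {(p : R)}).IsPrime := hinert
  haveI : (Ideal.span {(p : R)}).IsMaximal := aux_P_max p hp hinert
  haveI hQfin : Finite (R ⧸ Ideal.span {(p : R)}) := aux_finF B p hp
  haveI : CharP (R ⧸ Ideal.span {(p : R)}) p := aux_charF p hp hinert
  letI : Field (R ⧸ Ideal.span {(p : R)}) := Ideal.Quotient.field _
  letI : Fintype (R ⧸ Ideal.span {(p : R)}) := Fintype.ofFinite _
  set φ : ZMod p →+* (R ⧸ Ideal.span {(p : R)}) :=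
    ZMod.castHom (dvd_refl p) (R ⧸ Ideal.span {(p : R)}) with hφ
  have huz : ((u : ℤ) : ZMod p) ≠ 0 := by
    intro h
    exact hu ((ZMod.intCast_zmod_eq_zero_iff_dvd u p).mp h)
  have hu0 : ((u : ℤ) : R ⧸ Ideal.span {(p : R)}) ≠ 0 := by
    intro h
    rw [← map_intCast φ u] at h
    exact huz (φ.injective (by simpa using h))
  set xu : (R ⧸ Ideal.span {(p : R)})ˣ := Units.mk0 _ hu0 with hxu
  have hx1 : xu ^ (p - 1) = 1 := by
    ext
    rw [Units.val_pow_eq_pow_val]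
    simp only [hxu, Units.val_mk0, Units.val_one]
    rw [← map_intCast φ u, ← map_pow, ZMod.pow_card_sub_one_eq_one huz, map_one]
  obtain ⟨g, hg⟩ := IsCyclic.exists_generator (α := (R ⧸ Ideal.span {(p : R)})ˣ)
  have horder : orderOf g = p ^ 2 - 1 := by
    rw [orderOf_eq_card_of_forall_mem_zpowers hg]
    have h1 : Nat.card (R ⧸ Ideal.span {(p : R)})ˣ
        = Nat.card (R ⧸ Ideal.span {(p : R)}) - 1 := by
      rw [Nat.card_eq_fintype_card, Nat.card_eq_fintype_card, Fintype.card_units]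
    rw [h1, aux_cardF B p hp]
  obtain ⟨j, hj⟩ := Subgroup.mem_zpowers_iff.mp (hg xu)
  have hdvd : ((p ^ 2 - 1 : ℕ) : ℤ) ∣ j * ((p - 1 : ℕ) : ℤ) := by
    rw [← horder]
    rw [orderOf_dvd_iff_zpow_eq_one]
    rw [zpow_mul, hj, zpow_natCast, hx1]
  obtain ⟨c, hc⟩ := hdvd
  have hp2 : ((p ^ 2 - 1 : ℕ) : ℤ) = ((p:ℤ) + 1) * ((p:ℤ) - 1) := by
    have : 1 ≤ p ^ 2 := Nat.one_le_pow _ _ hp.pos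
    push_cast [this]
    ring
  have hp1 : ((p - 1 : ℕ) : ℤ) = (p : ℤ) - 1 := by
    push_cast [hp.one_le]
    ring
  rw [hp2, hp1] at hc
  have hpn1 : (p : ℤ) - 1 ≠ 0 := by
    have : (2 : ℤ) ≤ (p : ℤ) := by exact_mod_cast hp.two_le
    omega
  have hj' : j = ((p:ℤ) + 1) * c := by
    have h0 : (j - ((p:ℤ) + 1) * c) * ((p:ℤ) - 1) = 0 := by linear_combination hc
    rcases mul_eq_zero.mp h0 with h | h
    · linarith
    · exact absurd h hpn1
  set y := g ^ c with hy
  have hyx : y ^ (p + 1) = xu := by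
    have : y ^ ((p + 1 : ℕ) : ℤ) = xu := by
      rw [hy, ← zpow_mul]
      rw [← hj]
      congr 1
      push_cast
      rw [hj']
      ring
    rw [← zpow_natCast y (p+1)]
    exact this
  obtain ⟨b, hb⟩ := Ideal.Quotient.mk_surjective (y : (R ⧸ Ideal.span {(p : R)})ˣ).val
  refine ⟨b, ?_⟩
  have hnorm : ((Algebra.norm ℤ b : ℤ) : R ⧸ Ideal.span {(p : R)})
      = ((u : ℤ) : R ⧸ Ideal.span {(p : R)}) := by
    have h1 := congrArg (Ideal.Quotient.mk (Ideal.span {(p : R)})) (aux_CH B b)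
    rw [map_mul, map_sub, aux_mk_algebraMap, aux_mk_algebraMap] at h1
    have h2 := aux_conj B p hp hinert b
    calc ((Algebra.norm ℤ b : ℤ) : R ⧸ Ideal.span {(p : R)})
        = Ideal.Quotient.mk (Ideal.span {(p : R)}) b
            * ((((Algebra.leftMulMatrix B b).trace : ℤ) : R ⧸ Ideal.span {(p : R)})
              - Ideal.Quotient.mk (Ideal.span {(p : R)}) b) := h1.symm
      _ = Ideal.Quotient.mk (Ideal.span {(p : R)}) b
            * (Ideal.Quotient.mk (Ideal.span {(p : R)}) b) ^ p := by
          rw [h2, map_sub, aux_mk_algebraMap]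
      _ = (Ideal.Quotient.mk (Ideal.span {(p : R)}) b) ^ (p + 1) := by ring
      _ = (y.val) ^ (p + 1) := by rw [hb]
      _ = ((y ^ (p+1) : _ˣ) : _) := by rw [Units.val_pow_eq_pow_val]
      _ = xu.val := by rw [hyx]
      _ = ((u : ℤ) : R ⧸ Ideal.span {(p : R)}) := by rw [hxu, Units.val_mk0]
  have hz : ((Algebra.norm ℤ b - u : ℤ) : R ⧸ Ideal.span {(p : R)}) = 0 := by
    push_cast
    rw [sub_eq_zero]
    exact_mod_cast hnorm
  have hmem : algebraMap ℤ R (Algebra.norm ℤ b - u) ∈ Ideal.span {(p : R)} := by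
    rw [← aux_mk_algebraMap (Ideal.span {(p : R)}) (Algebra.norm ℤ b - u)] at hz
    exact Ideal.Quotient.eq_zero_iff_mem.mp hz
  have hdvdR : algebraMap ℤ R (p : ℤ) ∣ algebraMap ℤ R (Algebra.norm ℤ b - u) := by
    have : (p : R) = algebraMap ℤ R (p : ℤ) := by simp
    rw [← this]
    exact Ideal.mem_span_singleton.mp hmem
  exact aux_dvd_transfer B _ _ hdvdR

include B hp hinert in
theorem aux_surj : ∀ j, 1 ≤ j → ∀ u : ℤ, ¬((p : ℤ) ∣ u) →
    ∃ b : R, (p : ℤ) ^ j ∣ Algebra.norm ℤ b - u := by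
  intro j
  induction j with
  | zero => omega
  | succ n ih =>
    intro _ u hu
    by_cases hn : n = 0
    · subst hn
      simpa [pow_one] using aux_base_surj B p hp hinert u hu
    · have hn1 : 1 ≤ n := Nat.one_le_iff_ne_zero.mpr hn
      obtain ⟨b, hb⟩ := ih hn1 u hu
      obtain ⟨t, ht⟩ := hb
      haveI : Fact p.Prime := ⟨hp⟩
      have hNb : ¬ ((p : ℤ) ∣ Algebra.norm ℤ b) := by
        intro hdvd
        have h1 : (p : ℤ) ∣ Algebra.norm ℤ b - u :=
          ht ▸ ((dvd_pow_self (p:ℤ) hn).mul_right t)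
        exact hu ((dvd_sub_right hdvd).mp h1)
      obtain ⟨s₀, hs₀⟩ := aux_traceSurj B p hp hinert
      set T0 : ℤ := (Algebra.leftMulMatrix B s₀).trace with hT0
      set cc : ZMod p := ((Algebra.norm ℤ b * T0 : ℤ) : ZMod p) with hcc
      have hcc0 : cc ≠ 0 := by
        rw [hcc]
        intro h
        have h2 : (p : ℤ) ∣ Algebra.norm ℤ b * T0 :=
          (ZMod.intCast_zmod_eq_zero_iff_dvd _ p).mp h
        have hPZ : Prime (p : ℤ) := Int.prime_iff_natAbs_prime.mpr (by simpa using hp)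
        rcases hPZ.2.2 _ _ h2 with h3 | h3
        · exact hNb h3
        · exact hs₀ h3
      obtain ⟨m, hm⟩ := ZMod.intCast_surjective (n := p) (-(t : ZMod p) * cc⁻¹)
      set s : R := algebraMap ℤ R m * s₀ with hs
      have htrs : (Algebra.leftMulMatrix B s).trace = m * T0 := by
        rw [hs, map_mul, (Algebra.leftMulMatrix B).commutes, ← Algebra.smul_def,
          Matrix.trace_smul, hT0]
        simp
      set b' : R := b * (1 + algebraMap ℤ R ((p:ℤ)^n) * s) with hb'
      have hexp : Algebra.norm ℤ b' = Algebra.norm ℤ b *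
          (1 + (p:ℤ)^n * (m * T0) + ((p:ℤ)^n)^2 * Algebra.norm ℤ s) := by
        rw [hb', map_mul, aux_norm_one_add B, htrs]
      have key : Algebra.norm ℤ b' - u
          = (p:ℤ)^n * (t + Algebra.norm ℤ b * (m * T0))
            + (p:ℤ)^n * (p:ℤ)^n * (Algebra.norm ℤ b * Algebra.norm ℤ s) := by
        rw [hexp]
        linear_combination ht
      have hclaim : (p : ℤ) ∣ (t + Algebra.norm ℤ b * (m * T0)) := by
        have hz1 : ((t + Algebra.norm ℤ b * (m * T0) : ℤ) : ZMod p)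
            = (t : ZMod p) + cc * (m : ZMod p) := by
          rw [hcc]
          push_cast
          ring
        have hz2 : (t : ZMod p) + cc * (m : ZMod p) = 0 := by
          rw [hm]
          field_simp
          ring
        apply (ZMod.intCast_zmod_eq_zero_iff_dvd _ p).mp
        rw [hz1, hz2]
      refine ⟨b', ?_⟩
      rw [key]
      apply dvd_add
      · rw [pow_succ]
        exact mul_dvd_mul (dvd_refl _) hclaim
      · have h1 : (p:ℤ)^(n+1) ∣ (p:ℤ)^n * (p:ℤ)^n := by
          rw [← pow_add]
          exact pow_dvd_pow _ (by omega)
        exact h1.mul_right _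

theorem aux_mk_out {R : Type*} [CommRing R] (I : Ideal R) (β : R ⧸ I) :
    Ideal.Quotient.mk I (Quotient.out β) = β := Quotient.out_eq β

-- the induced norm map on the quotient ring
noncomputable def auxNu (R : Type*) [CommRing R] (M : ℕ) :
    (R ⧸ Ideal.span {((M : ℕ) : R)}) → ZMod M :=
  fun β => ((Algebra.norm ℤ (Quotient.out β) : ℤ) : ZMod M)

include B in
theorem aux_nu_mk (M : ℕ) (b : R) :
    auxNu R M (Ideal.Quotient.mk (Ideal.span {((M : ℕ) : R)}) b)
      = ((Algebra.norm ℤ b : ℤ) : ZMod M) := by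
  set I := Ideal.span {((M : ℕ) : R)} with hI
  have hout : Ideal.Quotient.mk I (Quotient.out (Ideal.Quotient.mk I b))
      = Ideal.Quotient.mk I b := Quotient.out_eq _
  have hmem : Quotient.out (Ideal.Quotient.mk I b) - b ∈ I := Ideal.Quotient.eq.mp hout
  obtain ⟨x, hx⟩ := Ideal.mem_span_singleton'.mp hmem
  have hrep : Quotient.out (Ideal.Quotient.mk I b) = b + algebraMap ℤ R (M : ℤ) * x := by
    have : ((M : ℕ) : R) = algebraMap ℤ R (M : ℤ) := by simp
    rw [← this]
    linear_combination -hx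
  have hdvd : (M : ℤ) ∣ Algebra.norm ℤ (Quotient.out (Ideal.Quotient.mk I b))
      - Algebra.norm ℤ b := by
    rw [hrep]
    exact aux_norm_mod B (M : ℤ) b x
  have h0 : ((Algebra.norm ℤ (Quotient.out (Ideal.Quotient.mk I b))
      - Algebra.norm ℤ b : ℤ) : ZMod M) = 0 :=
    (ZMod.intCast_zmod_eq_zero_iff_dvd _ M).mpr hdvd
  push_cast at h0
  unfold auxNu
  rw [sub_eq_zero] at h0
  exact_mod_cast h0

/-- the induced norm as a monoid hom on the quotient ring -/
noncomputable def auxNuHom (B : Module.Basis (Fin 2) ℤ R) (M : ℕ) :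
    (R ⧸ Ideal.span {((M : ℕ) : R)}) →* ZMod M where
  toFun := auxNu R M
  map_one' := by
    have h1 : (1 : R ⧸ Ideal.span {((M : ℕ) : R)})
        = Ideal.Quotient.mk (Ideal.span {((M : ℕ) : R)}) 1 := by simp
    rw [h1, aux_nu_mk B M 1]
    simp
  map_mul' := by
    intro a c
    obtain ⟨a0, rfl⟩ := Ideal.Quotient.mk_surjective a
    obtain ⟨c0, rfl⟩ := Ideal.Quotient.mk_surjective c
    show auxNu R M (Ideal.Quotient.mk _ a0 * Ideal.Quotient.mk _ c0)
      = auxNu R M (Ideal.Quotient.mk _ a0) * auxNu R M (Ideal.Quotient.mk _ c0)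
    rw [← map_mul, aux_nu_mk B, aux_nu_mk B, aux_nu_mk B, ← Int.cast_mul, map_mul]

include B in
theorem aux_cardQ (M : ℕ) :
    Nat.card (R ⧸ Ideal.span {((M : ℕ) : R)}) = M ^ 2 := by
  have h1 : Ideal.absNorm (Ideal.span {((M : ℕ) : R)}) = M ^ 2 := by
    rw [Ideal.absNorm_span_singleton]
    have h : ((M : ℕ) : R) = algebraMap ℤ R ((M : ℕ) : ℤ) := by simp
    rw [h, aux_norm_int' B]
    rw [Int.natAbs_pow]
    simp
  rw [Ideal.absNorm_apply, Submodule.cardQuot_apply] at h1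
  exact h1

include B in
theorem aux_finQ (M : ℕ) (hM : M ≠ 0) : Finite (R ⧸ Ideal.span {((M : ℕ) : R)}) := by
  have hpos : 0 < Nat.card (R ⧸ Ideal.span {((M : ℕ) : R)}) := by
    rw [aux_cardQ B M]
    exact pow_pos (Nat.pos_of_ne_zero hM) 2
  exact (Nat.card_pos_iff.mp hpos).2

include hp hinert in
theorem aux_isUnit_mk (k : ℕ) (hk : 1 ≤ k) (b : R) :
    IsUnit (Ideal.Quotient.mk (Ideal.span {((p ^ k : ℕ) : R)}) b)
      ↔ b ∉ Ideal.span {(p : R)} := by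
  have hMR : ((p ^ k : ℕ) : R) = (p : R) ^ k := by push_cast; rfl
  have hI : Ideal.span {((p ^ k : ℕ) : R)} = (Ideal.span {(p : R)}) ^ k := by
    rw [hMR, Ideal.span_singleton_pow]
  have hIP : Ideal.span {((p ^ k : ℕ) : R)} ≤ Ideal.span {(p : R)} := by
    rw [hI]
    exact Ideal.pow_le_self (by omega)
  constructor
  · intro hunit hbP
    obtain ⟨v, hv⟩ := isUnit_iff_exists_inv.mp hunit
    obtain ⟨c, rfl⟩ := Ideal.Quotient.mk_surjective v
    rw [← map_mul, ← map_one (Ideal.Quotient.mk (Ideal.span {((p ^ k : ℕ) : R)}))] at hv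
    have hmem : b * c - 1 ∈ Ideal.span {(p : R)} := hIP (Ideal.Quotient.eq.mp hv)
    have h1 : (1 : R) ∈ Ideal.span {(p : R)} := by
      have hbc : b * c ∈ Ideal.span {(p : R)} := Ideal.mul_mem_right _ _ hbP
      have := Ideal.sub_mem _ hbc hmem
      simpa using this
    exact hinert.ne_top ((Ideal.eq_top_iff_one _).mpr h1)
  · intro hb
    have hmax : (Ideal.span {(p : R)}).IsMaximal := aux_P_max p hp hinert
    have hlt : Ideal.span {(p : R)} < Ideal.span {(p : R)} ⊔ Ideal.span {b} := by
      refine lt_of_le_of_ne le_sup_left ?_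
      intro heq
      have h2 : Ideal.span {b} ≤ Ideal.span {(p : R)} := heq ▸ le_sup_right
      exact hb (h2 (Ideal.mem_span_singleton_self b))
    have hsup : Ideal.span {(p : R)} ⊔ Ideal.span {b} = ⊤ := hmax.1.2 _ hlt
    have hcop : IsCoprime ((Ideal.span {(p : R)}) ^ k) (Ideal.span {b}) :=
      (Ideal.isCoprime_iff_sup_eq.mpr hsup).pow_left
    have hsup2 : (Ideal.span {(p : R)}) ^ k ⊔ Ideal.span {b} = ⊤ :=
      Ideal.isCoprime_iff_sup_eq.mp hcop
    have h1 : (1 : R) ∈ (Ideal.span {(p : R)}) ^ k ⊔ Ideal.span {b} := by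
      rw [hsup2]; trivial
    obtain ⟨y, hy, z, hz, hyz⟩ := Submodule.mem_sup.mp h1
    obtain ⟨c, hc⟩ := Ideal.mem_span_singleton'.mp hz
    refine IsUnit.of_mul_eq_one (Ideal.Quotient.mk _ c) ?_
    rw [← map_mul]
    have : Ideal.Quotient.mk (Ideal.span {((p ^ k : ℕ) : R)}) (b * c)
        = Ideal.Quotient.mk _ 1 := by
      rw [Ideal.Quotient.eq]
      have hyI : y ∈ Ideal.span {((p ^ k : ℕ) : R)} := by rw [hI]; exact hy
      have : b * c - 1 = -y := by linear_combination hc + hyz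
      rw [this]
      exact neg_mem hyI
    rw [this, map_one]

include B hp hinert in
theorem aux_main (k : ℕ) (hk : 1 ≤ k) :
    {β : R ⧸ Ideal.span {((p ^ k : ℕ) : R)} | ∃ b : R,
        Ideal.Quotient.mk (Ideal.span {((p ^ k : ℕ) : R)}) b = β ∧
        Algebra.norm ℤ b ≡ 1 [ZMOD ((p ^ k : ℕ) : ℤ)]}.ncard
      = (p + 1) * p ^ (k - 1) := by
  classical
  haveI : Fact p.Prime := ⟨hp⟩
  haveI : (Ideal.span {(p : R)}).IsPrime := hinert
  haveI : NeZero (p ^ k) := ⟨pow_ne_zero _ hp.ne_zero⟩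
  haveI hQfin : Finite (R ⧸ Ideal.span {((p ^ k : ℕ) : R)}) :=
    aux_finQ B (p ^ k) (pow_ne_zero _ hp.ne_zero)
  set νH : (R ⧸ Ideal.span {((p ^ k : ℕ) : R)}) →* ZMod (p ^ k) := auxNuHom B (p ^ k) with hνH
  have hνH_mk : ∀ b : R, νH (Ideal.Quotient.mk (Ideal.span {((p ^ k : ℕ) : R)}) b)
      = ((Algebra.norm ℤ b : ℤ) : ZMod (p ^ k)) := fun b => aux_nu_mk B (p ^ k) b
  -- units characterization packaged
  have hUnit_iff : ∀ b : R, IsUnit (Ideal.Quotient.mk (Ideal.span {((p ^ k : ℕ) : R)}) b)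
      ↔ b ∉ Ideal.span {(p : R)} := fun b => aux_isUnit_mk p hp hinert k hk b
  have hPdvd : ∀ b : R, b ∈ Ideal.span {(p : R)} → (p : ℤ) ∣ Algebra.norm ℤ b := by
    intro b hb
    obtain ⟨r, hr⟩ := Ideal.mem_span_singleton'.mp hb
    have hpR : (p : R) = algebraMap ℤ R (p : ℤ) := by simp
    have : Algebra.norm ℤ b = Algebra.norm ℤ r * (p : ℤ) ^ 2 := by
      rw [← hr, map_mul, hpR, aux_norm_int' B]
    rw [this]
    exact Dvd.dvd.mul_left (dvd_pow_self _ two_ne_zero) _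
  -- Step B : ncard = card of kernel
  have hker : {β : R ⧸ Ideal.span {((p ^ k : ℕ) : R)} | ∃ b : R,
        Ideal.Quotient.mk (Ideal.span {((p ^ k : ℕ) : R)}) b = β ∧
        Algebra.norm ℤ b ≡ 1 [ZMOD ((p ^ k : ℕ) : ℤ)]}.ncard
      = Nat.card ((Units.map νH).ker) := by
    rw [← Nat.card_coe_set_eq]
    apply Nat.card_congr
    symm
    refine Equiv.ofBijective (fun u => ⟨((u : (R ⧸ Ideal.span {((p ^ k : ℕ) : R)})ˣ) : _), ?_⟩) ⟨?_, ?_⟩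
    · -- membership
      obtain ⟨u, hu⟩ := u
      have hval : νH (u.val) = 1 := by
        have := congrArg Units.val (MonoidHom.mem_ker.mp hu)
        rwa [Units.coe_map] at this
      have hx := aux_mk_out (Ideal.span {((p ^ k : ℕ) : R)}) (u.val)
      refine ⟨Quotient.out (u.val), hx, ?_⟩
      have h2 : ((Algebra.norm ℤ (Quotient.out (u.val)) : ℤ) : ZMod (p ^ k))
          = ((1 : ℤ) : ZMod (p ^ k)) := by
        rw [Int.cast_one, ← hνH_mk, hx, hval]
      exact_mod_cast (ZMod.intCast_eq_intCast_iff _ _ _).mp h2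
    · -- injective
      intro u v huv
      have := congrArg Subtype.val huv
      exact Subtype.ext (Units.ext this)
    · -- surjective
      rintro ⟨β, b, rfl, hmod⟩
      have hd : ((p ^ k : ℕ) : ℤ) ∣ 1 - Algebra.norm ℤ b := hmod.dvd
      obtain ⟨d, hdd⟩ := hd
      have hMQ : (((p ^ k : ℕ) : ℤ) : R ⧸ Ideal.span {((p ^ k : ℕ) : R)}) = 0 := by
        rw [Int.cast_natCast, ← map_natCast (Ideal.Quotient.mk (Ideal.span {((p ^ k : ℕ) : R)}))]
        rw [Ideal.Quotient.eq_zero_iff_mem]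
        exact Ideal.mem_span_singleton_self _
      have hmul : Ideal.Quotient.mk (Ideal.span {((p ^ k : ℕ) : R)}) b
          * Ideal.Quotient.mk (Ideal.span {((p ^ k : ℕ) : R)})
              (algebraMap ℤ R ((Algebra.leftMulMatrix B b).trace) - b) = 1 := by
        rw [← map_mul]
        have h1 := congrArg (Ideal.Quotient.mk (Ideal.span {((p ^ k : ℕ) : R)})) (aux_CH B b)
        rw [h1, aux_mk_algebraMap]
        have : ((Algebra.norm ℤ b : ℤ) : R ⧸ Ideal.span {((p ^ k : ℕ) : R)})
            = 1 - (((p ^ k : ℕ) : ℤ) : R ⧸ Ideal.span {((p ^ k : ℕ) : R)}) * ((d : ℤ) : _) := by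
          rw [show (Algebra.norm ℤ b : ℤ) = 1 - ((p ^ k : ℕ) : ℤ) * d by linarith [hdd]]
          push_cast
          ring
        rw [this, hMQ]
        ring
      set w : (R ⧸ Ideal.span {((p ^ k : ℕ) : R)})ˣ :=
        ⟨Ideal.Quotient.mk (Ideal.span {((p ^ k : ℕ) : R)}) b,
         Ideal.Quotient.mk (Ideal.span {((p ^ k : ℕ) : R)})
            (algebraMap ℤ R ((Algebra.leftMulMatrix B b).trace) - b),
         hmul, by rw [mul_comm] at hmul; exact hmul⟩ with hw
      have hwker : w ∈ (Units.map νH).ker := by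
        rw [MonoidHom.mem_ker]
        ext
        rw [Units.coe_map]
        show νH (w : _) = 1
        rw [hw]
        show νH (Ideal.Quotient.mk (Ideal.span {((p ^ k : ℕ) : R)}) b) = 1
        rw [hνH_mk]
        have := (ZMod.intCast_eq_intCast_iff _ _ _).mpr hmod
        rwa [Int.cast_one] at this
      exact ⟨⟨w, hwker⟩, rfl⟩
  rw [hker]
  -- Step C : surjectivity of the induced norm on units
  have hsurj : Function.Surjective (Units.map νH) := by
    intro w
    obtain ⟨u, hu⟩ := ZMod.intCast_surjective (n := p ^ k) (w : ZMod (p ^ k))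
    have hpu : ¬ ((p : ℤ) ∣ u) := by
      intro ⟨c, hc⟩
      have hunit : IsUnit ((u : ℤ) : ZMod (p ^ k)) := by rw [hu]; exact w.isUnit
      rw [hc] at hunit
      push_cast at hunit
      have hunitp : IsUnit ((p : ℕ) : ZMod (p ^ k)) := isUnit_of_mul_isUnit_left hunit
      have hdvd : (p : ℕ) ∣ p ^ k := dvd_pow_self p (by omega)
      have h0 : IsUnit ((p : ℕ) : ZMod p) := by
        have := hunitp.map (ZMod.castHom hdvd (ZMod p))
        rwa [map_natCast] at this
      rw [ZMod.natCast_self] at h0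
      exact (by simpa using h0 : IsUnit (0 : ZMod p)).ne_zero rfl
    obtain ⟨b, hb⟩ := aux_surj B p hp hinert k hk u hpu
    have hbP : b ∉ Ideal.span {(p : R)} := by
      intro hmem
      have h1 : (p : ℤ) ∣ Algebra.norm ℤ b := hPdvd b hmem
      have h2 : (p : ℤ) ∣ Algebra.norm ℤ b - u := (dvd_pow_self (p:ℤ) (by omega : k ≠ 0)) |>.trans hb
      exact hpu ((dvd_sub_right h1).mp h2)
    have hunit : IsUnit (Ideal.Quotient.mk (Ideal.span {((p ^ k : ℕ) : R)}) b) :=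
      (hUnit_iff b).mpr hbP
    refine ⟨hunit.unit, ?_⟩
    ext
    rw [Units.coe_map]
    show νH (hunit.unit : _) = (w : ZMod (p ^ k))
    rw [IsUnit.unit_spec, hνH_mk, ← hu]
    have : Algebra.norm ℤ b ≡ u [ZMOD ((p ^ k : ℕ) : ℤ)] := by
      refine Int.ModEq.symm (Int.modEq_iff_dvd.mpr ?_)
      exact_mod_cast hb
    exact_mod_cast (ZMod.intCast_eq_intCast_iff _ _ _).mpr this
  -- Step D : counting
  have hQcard : Nat.card (R ⧸ Ideal.span {((p ^ k : ℕ) : R)}) = (p ^ k) ^ 2 :=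
    aux_cardQ B (p ^ k)
  have hMR : ((p ^ k : ℕ) : R) = (p : R) ^ k := by push_cast; rfl
  have hIP : Ideal.span {((p ^ k : ℕ) : R)} ≤ Ideal.span {(p : R)} := by
    rw [hMR, ← Ideal.span_singleton_pow]
    exact Ideal.pow_le_self (by omega)
  set π : (R ⧸ Ideal.span {((p ^ k : ℕ) : R)}) →+* (R ⧸ Ideal.span {(p : R)}) :=
    Ideal.Quotient.factor hIP with hπ
  set π' : (R ⧸ Ideal.span {((p ^ k : ℕ) : R)}) →+ (R ⧸ Ideal.span {(p : R)}) :=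
    π.toAddMonoidHom with hπ'
  have hπsurj : Function.Surjective π' := by
    intro y
    obtain ⟨b, rfl⟩ := Ideal.Quotient.mk_surjective y
    exact ⟨Ideal.Quotient.mk _ b, Ideal.Quotient.factor_mk hIP b⟩
  have hsplit : Nat.card (R ⧸ Ideal.span {((p ^ k : ℕ) : R)})
      = Nat.card ((R ⧸ Ideal.span {((p ^ k : ℕ) : R)}) ⧸ π'.ker) * Nat.card π'.ker :=
    AddSubgroup.card_eq_card_quotient_mul_card_addSubgroup _
  have hquot : Nat.card ((R ⧸ Ideal.span {((p ^ k : ℕ) : R)}) ⧸ π'.ker) = p ^ 2 := by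
    rw [Nat.card_congr (QuotientAddGroup.quotientKerEquivOfSurjective π' hπsurj).toEquiv]
    exact aux_cardF B p hp
  have hcompl_eq : {x : R ⧸ Ideal.span {((p ^ k : ℕ) : R)} | IsUnit x}ᶜ = (π'.ker : Set _) := by
    ext x
    obtain ⟨b, rfl⟩ := Ideal.Quotient.mk_surjective x
    simp only [Set.mem_compl_iff, Set.mem_setOf_eq, SetLike.mem_coe, AddMonoidHom.mem_ker]
    rw [hUnit_iff b, not_not]
    show b ∈ Ideal.span {(p : R)} ↔ π (Ideal.Quotient.mk _ b) = 0
    rw [hπ, Ideal.Quotient.factor_mk, Ideal.Quotient.eq_zero_iff_mem]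
  have hU : Nat.card (R ⧸ Ideal.span {((p ^ k : ℕ) : R)})ˣ
      = {x : R ⧸ Ideal.span {((p ^ k : ℕ) : R)} | IsUnit x}.ncard := by
    rw [← Nat.card_coe_set_eq]
    apply Nat.card_congr
    refine Equiv.ofBijective (fun u => ⟨(u : _), u.isUnit⟩) ⟨?_, ?_⟩
    · intro u v huv
      exact Units.ext (congrArg Subtype.val huv)
    · rintro ⟨x, hx⟩
      exact ⟨hx.unit, Subtype.ext hx.unit_spec⟩
  have htotal : {x : R ⧸ Ideal.span {((p ^ k : ℕ) : R)} | IsUnit x}.ncard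
      + Nat.card π'.ker = (p ^ k) ^ 2 := by
    have h1 := Set.ncard_add_ncard_compl
      {x : R ⧸ Ideal.span {((p ^ k : ℕ) : R)} | IsUnit x}
    rw [hcompl_eq] at h1
    have h2 : (π'.ker : Set (R ⧸ Ideal.span {((p ^ k : ℕ) : R)})).ncard
        = Nat.card π'.ker := by
      rw [← Nat.card_coe_set_eq]
      rfl
    rw [h2, hQcard] at h1
    exact h1
  have hUsplit : Nat.card (R ⧸ Ideal.span {((p ^ k : ℕ) : R)})ˣ
      = Nat.card (ZMod (p ^ k))ˣ * Nat.card ((Units.map νH).ker) := by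
    have h1 := Subgroup.card_eq_card_quotient_mul_card_subgroup (Units.map νH).ker
    rw [Nat.card_congr (QuotientGroup.quotientKerEquivOfSurjective _ hsurj).toEquiv] at h1
    exact h1
  have hZcard : Nat.card (ZMod (p ^ k))ˣ = p ^ (k - 1) * (p - 1) := by
    rw [Nat.card_eq_fintype_card, ZMod.card_units_eq_totient]
    exact Nat.totient_prime_pow hp (by omega)
  -- final arithmetic
  obtain ⟨l, rfl⟩ : ∃ l, k = l + 1 := ⟨k - 1, by omega⟩
  obtain ⟨q, rfl⟩ : ∃ q, p = q + 1 := ⟨p - 1, by have := hp.two_le; omega⟩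
  have hq1 : 1 ≤ q := by
    have := hp.two_le
    omega
  set κ := Nat.card ((Units.map νH).ker) with hκ
  set uK := Nat.card π'.ker with huK
  have E1 : ((q+1) ^ (l+1)) ^ 2 = (q+1) ^ 2 * uK := by
    rw [← hquot, ← hsplit, hQcard]
  have huKval : uK = (q+1) ^ (2*l) := by
    have h2 : ((q+1) ^ (l+1)) ^ 2 = (q+1) ^ 2 * (q+1) ^ (2*l) := by ring
    have := E1.symm.trans h2
    exact Nat.eq_of_mul_eq_mul_left (by positivity) this
  have E3 : Nat.card (R ⧸ Ideal.span {(((q+1) ^ (l+1) : ℕ) : R)})ˣ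
      = ((q+1) ^ l * q) * κ := by
    rw [hUsplit, hZcard]
    simp only [Nat.add_sub_cancel]
    try ring
  have E2 : ((q+1) ^ l * q) * κ + (q+1) ^ (2*l) = ((q+1) ^ (l+1)) ^ 2 := by
    rw [← E3, ← huKval, hU]
    exact htotal
  have Etarget : ((q+1) ^ l * q) * ((q + 1 + 1) * (q+1) ^ l) + (q+1) ^ (2*l)
      = ((q+1) ^ (l+1)) ^ 2 := by ring
  have hfinal : κ = (q + 1 + 1) * (q+1) ^ l := by
    have h1 : ((q+1) ^ l * q) * κ = ((q+1) ^ l * q) * ((q + 1 + 1) * (q+1) ^ l) :=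
      Nat.add_right_cancel (E2.trans Etarget.symm)
    exact Nat.eq_of_mul_eq_mul_left (by positivity) h1
  rw [hfinal]
  simp only [Nat.add_sub_cancel]

end aux

/-- The set of norm-one residues in `O_K / M·O_K`: residue classes having a representative
`b ∈ O_K` with `N(b) ≡ 1 (mod M)`. -/
def normOneResidues (M : ℕ) : Set (𝓞 K ⧸ Ideal.span {(M : 𝓞 K)}) :=
  {β | ∃ b : 𝓞 K, Ideal.Quotient.mk (Ideal.span {(M : 𝓞 K)}) b = β ∧
    Algebra.norm ℤ b ≡ 1 [ZMOD (M : ℤ)]}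

/-- if the prime `p` is inert in the real quadratic field `K`
(`p·O_K` is a prime ideal), then for every `k ≥ 1` the number of norm-one residues in
`O_K/p^k·O_K` equals `(p+1)·p^(k-1)`. -/
theorem card_normOneResidues_inert
    (hdeg : Module.finrank ℚ K = 2) (hreal : Nonempty (K →+* ℝ))
    (p : ℕ) (hp : p.Prime)
    (hinert : (Ideal.span {(p : 𝓞 K)}).IsPrime)
    (k : ℕ) (hk : 1 ≤ k) :
    (normOneResidues K (p ^ k)).ncard = (p + 1) * p ^ (k - 1) := by
  have h2 : Module.finrank ℤ (𝓞 K) = 2 := by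
    rw [RingOfIntegers.rank]; exact hdeg
  let B : Module.Basis (Fin 2) ℤ (𝓞 K) := (Module.finBasis ℤ (𝓞 K)).reindex (finCongr h2)
  exact aux_main B p hp hinert k hk
end

section
/- Let p be a prime that is unramified in K (i.e. p·O_K is not the square of a prime ideal), let P be a prime ideal of O_K dividing p·O_K, and let k ≥ 1 and 1 ≤ l ≤ k be integers. Then the number of residue classes β ∈ O_K/p^k·O_K admitting a representative b ∈ O_K with N(b) ≡ 1 (mod p^k) and b ≡ 1 (mod P^l) equals p^{k−l}. -/
set_option linter.unusedSectionVars false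
set_option linter.unusedVariables false
set_option maxHeartbeats 1000000

open Polynomial

lemma ncard_eq_mul_of_fibers {α β : Type*} [Finite α] (f : α → β) (S : Set α) (T : Set β)
    (n : ℕ) (h1 : ∀ a ∈ S, f a ∈ T) (hT : T.Finite)
    (h2 : ∀ b ∈ T, (S ∩ f ⁻¹' {b}).ncard = n) :
    S.ncard = n * T.ncard := by
  classical
  have hS : S.Finite := Set.toFinite S
  set s := hS.toFinset with hs
  set t := hT.toFinset with ht
  have hmap : ∀ x ∈ s, f x ∈ t := by
    intro x hx
    rw [hs, Set.Finite.mem_toFinset] at hx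
    rw [ht, Set.Finite.mem_toFinset]
    exact h1 x hx
  have hcard := Finset.card_eq_sum_card_fiberwise hmap
  have hfib : ∀ b ∈ t, (s.filter (fun a => f a = b)).card = n := by
    intro b hb
    rw [ht, Set.Finite.mem_toFinset] at hb
    have hfin : (S ∩ f ⁻¹' {b}).Finite := Set.toFinite _
    have : s.filter (fun a => f a = b) = hfin.toFinset := by
      ext x
      simp [hs, Set.Finite.mem_toFinset]
    rw [this, ← Set.ncard_eq_toFinset_card _ hfin]
    exact h2 b hb
  have : s.card = ∑ b ∈ t, n := by
    rw [hcard]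
    exact Finset.sum_congr rfl hfib
  rw [Finset.sum_const, smul_eq_mul] at this
  have hsc : S.ncard = s.card := Set.ncard_eq_toFinset_card _ hS
  have htc : T.ncard = t.card := Set.ncard_eq_toFinset_card _ hT
  rw [hsc, htc, this, mul_comm]

lemma fiber_count_zmod {A : Type*} [AddCommGroup A] [Finite A] {p : ℕ} (hp : p.Prime)
    (f : A → ZMod p) (hadd : ∀ x y, f (x + y) = f x + f y) (hnz : ∃ x, f x ≠ 0)
    (hcard : Nat.card A = p ^ 2) (c : ZMod p) : {x | f x = c}.ncard = p := by
  classical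
  haveI := Fact.mk hp
  set F : A →+ ZMod p := AddMonoidHom.mk' f hadd with hF
  have hFap : ∀ x, F x = f x := fun _ => rfl
  -- surjectivity
  have hsurj : Function.Surjective f := by
    intro d
    obtain ⟨x0, hx0⟩ := hnz
    set y := f x0 with hy
    set n := (d * y⁻¹).val with hn
    refine ⟨n • x0, ?_⟩
    have : f (n • x0) = F (n • x0) := rfl
    rw [this, map_nsmul, hFap, ← hy, nsmul_eq_mul]
    have hcast : ((n : ℕ) : ZMod p) = d * y⁻¹ := ZMod.natCast_rightInverse _
    rw [hcast, mul_assoc, inv_mul_cancel₀ hx0, mul_one]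
  -- fibers are translates
  have htrans : ∀ d : ZMod p, ∃ xd, f xd = d := fun d => hsurj d
  have hfib_eq : ∀ d : ZMod p, {x | f x = d}.ncard = {x | f x = 0}.ncard := by
    intro d
    obtain ⟨xd, hxd⟩ := htrans d
    have himg : {x | f x = d} = (fun x => x + xd) '' {x | f x = 0} := by
      ext x
      simp only [Set.mem_setOf_eq, Set.mem_image]
      constructor
      · intro hx
        refine ⟨x - xd, ?_, by abel⟩
        have : f (x - xd) = F (x - xd) := rfl
        rw [this, map_sub, hFap, hFap, hx, hxd, sub_self]
      · rintro ⟨z, hz, rfl⟩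
        rw [hadd, hz, hxd, zero_add]
    rw [himg, Set.ncard_image_of_injective _ (add_left_injective xd)]
  -- total count
  set m := {x : A | f x = 0}.ncard with hm
  have htot : (Set.univ : Set A).ncard = m * (Set.univ : Set (ZMod p)).ncard := by
    apply ncard_eq_mul_of_fibers f _ _ m (by intro a _; trivial) (Set.toFinite _)
    intro b _
    rw [Set.univ_inter]
    have : f ⁻¹' {b} = {x | f x = b} := rfl
    rw [this, hfib_eq b]
  rw [Set.ncard_univ, Set.ncard_univ, Nat.card_zmod, hcard] at htot
  have hm_eq : m = p := by
    have hp0 : 0 < p := hp.pos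
    have : p * p = m * p := by rw [← htot]; ring
    nlinarith
  rw [hfib_eq c]
  exact hm_eq

section QuadRing
variable {R : Type*} [CommRing R] [IsDomain R] [IsDedekindDomain R] [CharZero R]
  [Module.Free ℤ R] [Module.Finite ℤ R]

lemma quadid {R : Type*} [CommRing R] [Module.Free ℤ R] [Module.Finite ℤ R]
    (h2 : Module.finrank ℤ R = 2) (x : R) :
    x * x = (Algebra.trace ℤ R x : ℤ) • x - (Algebra.norm ℤ x : ℤ) • (1 : R) := by
  classical
  let b : Module.Basis (Fin 2) ℤ R := (Module.finBasis ℤ R).reindex (finCongr h2)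
  have htr := Algebra.trace_eq_matrix_trace b x
  have hnm := Algebra.norm_eq_matrix_det b x
  set M := Algebra.leftMulMatrix b x with hM
  have hcp : M.charpoly = X^2 - C M.trace * X + C M.det := by
    rw [Matrix.charpoly, Matrix.det_fin_two, Matrix.trace_fin_two, Matrix.det_fin_two]
    simp [Matrix.charmatrix_apply_eq, Matrix.charmatrix_apply_ne]
    ring
  have hcayley := Matrix.aeval_self_charpoly M
  rw [hcp] at hcayley
  simp only [map_add, map_sub, map_mul, map_pow, aeval_X, aeval_C] at hcayley
  have key : Algebra.leftMulMatrix b (x * x - (Algebra.trace ℤ R x : ℤ) • x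
      + (Algebra.norm ℤ x : ℤ) • (1 : R)) = 0 := by
    rw [map_add, map_sub, map_mul, map_zsmul, map_zsmul, map_one, htr, hnm, ← hM]
    have : (algebraMap ℤ (Matrix (Fin 2) (Fin 2) ℤ)) M.trace * M = M.trace • M := by
      simp [Algebra.smul_def]
    rw [pow_two] at hcayley
    rw [show (M.trace • M : Matrix (Fin 2) (Fin 2) ℤ) = (algebraMap ℤ _) M.trace * M by
      simp [Algebra.smul_def], show (M.det • (1:Matrix (Fin 2) (Fin 2) ℤ)) = (algebraMap ℤ _) M.det * 1 by
      simp [Algebra.smul_def]]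
    rw [mul_one]
    exact hcayley
  have hinj := Algebra.leftMulMatrix_injective b
  have := hinj (by rw [key, map_zero] : Algebra.leftMulMatrix b _ = Algebra.leftMulMatrix b 0)
  have h0 : x * x - (Algebra.trace ℤ R x : ℤ) • x + (Algebra.norm ℤ x : ℤ) • (1 : R) = 0 := this
  linear_combination (norm := abel_nf) h0

/-- the conjugation -/
noncomputable def kconj (x : R) : R := (Algebra.trace ℤ R x : R) - x

lemma mul_kconj (h2 : Module.finrank ℤ R = 2) (x : R) : x * kconj x = (Algebra.norm ℤ x : R) := by
  have := quadid h2 x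
  rw [kconj, mul_sub, this, zsmul_eq_mul, zsmul_eq_mul]
  ring

lemma kconj_add (x y : R) : kconj (x + y) = kconj x + kconj y := by
  simp [kconj, map_add]; ring

lemma kconj_zero : kconj (0 : R) = 0 := by simp [kconj]

lemma trace_intCast (h2 : Module.finrank ℤ R = 2) (n : ℤ) : Algebra.trace ℤ R (n : R) = 2 * n := by
  have h : ((n : R)) = algebraMap ℤ R n := by simp
  rw [h, Algebra.trace_algebraMap, h2]; ring

lemma kconj_intCast (h2 : Module.finrank ℤ R = 2) (n : ℤ) : kconj ((n : R)) = n := by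
  rw [kconj, trace_intCast h2]; push_cast; ring

lemma kconj_one (h2 : Module.finrank ℤ R = 2) : kconj (1 : R) = 1 := by
  have := kconj_intCast (R := R) h2 1; push_cast at this; simpa using this

lemma kconj_mul (h2 : Module.finrank ℤ R = 2) (x y : R) : kconj (x * y) = kconj x * kconj y := by
  rcases eq_or_ne x 0 with rfl | hx
  · simp [kconj_zero]
  rcases eq_or_ne y 0 with rfl | hy
  · simp [kconj_zero]
  have hxy : x * y ≠ 0 := mul_ne_zero hx hy
  have h1 : (x * y) * kconj (x * y) = (x * y) * (kconj x * kconj y) := by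
    rw [mul_kconj h2, map_mul]
    push_cast
    rw [show x * y * (kconj x * kconj y) = (x * kconj x) * (y * kconj y) by ring,
      mul_kconj h2, mul_kconj h2]
  exact mul_left_cancel₀ hxy h1

lemma kconj_kconj (h2 : Module.finrank ℤ R = 2) (x : R) : kconj (kconj x) = x := by
  rw [kconj, kconj, map_sub, trace_intCast h2]
  push_cast; ring

lemma kconj_natCast (h2 : Module.finrank ℤ R = 2) (n : ℕ) : kconj ((n : R)) = n := by
  have := kconj_intCast (R := R) h2 n; push_cast at this ⊢; exact this

lemma add_kconj (x : R) : x + kconj x = (Algebra.trace ℤ R x : R) := by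
  rw [kconj]; ring

/-- conj as ring equiv -/
noncomputable def kconjEquiv (h2 : Module.finrank ℤ R = 2) : R ≃+* R where
  toFun := kconj
  invFun := kconj
  left_inv := kconj_kconj h2
  right_inv := kconj_kconj h2
  map_mul' := kconj_mul h2
  map_add' := kconj_add

lemma kconjEquiv_apply (h2 : Module.finrank ℤ R = 2) (x : R) :
    kconjEquiv h2 x = kconj x := rfl


lemma intCast_mem_span_intCast_iff (h2 : Module.finrank ℤ R = 2) {m n : ℤ} (hm : m ≠ 0) :
    (n : R) ∈ Ideal.span {(m : R)} ↔ m ∣ n := by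
  rw [Ideal.mem_span_singleton]
  constructor
  · rintro ⟨x, hx⟩
    have hconj : (n : R) = (m : R) * kconj x := by
      have : kconj ((n : R)) = kconj ((m : R) * x) := by rw [hx]
      rwa [kconj_intCast h2, kconj_mul h2, kconj_intCast h2] at this
    have hc : (n : R) * (n : R) = (m : R) * (m : R) * (x * kconj x) := by
      rw [congrArg₂ (· * ·) hx hconj]; ring
    rw [mul_kconj h2] at hc
    have hz : n * n = m * m * Algebra.norm ℤ x := by
      have : ((n * n : ℤ) : R) = ((m * m * Algebra.norm ℤ x : ℤ) : R) := by push_cast; exact hc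
      exact_mod_cast this
    have : m ^ 2 ∣ n ^ 2 := ⟨Algebra.norm ℤ x, by rw [pow_two, pow_two]; exact hz⟩
    exact (Int.pow_dvd_pow_iff (two_ne_zero)).mp this
  · rintro ⟨c, rfl⟩
    exact ⟨(c : R), by push_cast; ring⟩

lemma natCast_mem_span_natCast_iff (h2 : Module.finrank ℤ R = 2) {m n : ℕ} (hm : m ≠ 0) :
    (n : R) ∈ Ideal.span {(m : R)} ↔ m ∣ n := by
  have := intCast_mem_span_intCast_iff (R := R) h2 (m := (m:ℤ)) (n := (n:ℤ)) (by exact_mod_cast hm)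
  push_cast at this
  rw [this]
  exact Int.natCast_dvd_natCast


lemma norm_intCast (h2 : Module.finrank ℤ R = 2) (c : ℤ) : Algebra.norm ℤ ((c : R)) = c ^ 2 := by
  classical
  let b : Module.Basis (Fin 2) ℤ R := (Module.finBasis ℤ R).reindex (finCongr h2)
  have : ((c : R)) = algebraMap ℤ R c := by simp
  rw [this, Algebra.norm_algebraMap_of_basis b]
  simp

lemma card_quot_intCast (h2 : Module.finrank ℤ R = 2) (c : ℤ) :
    Nat.card (R ⧸ Ideal.span {(c : R)}) = (c ^ 2).natAbs := by
  rw [← Submodule.cardQuot_apply, ← Ideal.absNorm_apply, Ideal.absNorm_span_singleton,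
    norm_intCast h2]

lemma finite_quot_intCast (h2 : Module.finrank ℤ R = 2) {c : ℤ} (hc : c ≠ 0) :
    Finite (R ⧸ Ideal.span {(c : R)}) := by
  apply Nat.finite_of_card_ne_zero
  rw [card_quot_intCast h2]
  simpa using pow_ne_zero 2 hc

-- integers in a prime over p
lemma intCast_mem_prime_iff {p : ℕ} (hp : p.Prime) {P : Ideal R} (hP : P.IsPrime)
    (hpP : (p : R) ∈ P) (hPne : P ≠ ⊤) (n : ℤ) : (n : R) ∈ P ↔ (p : ℤ) ∣ n := by
  constructor
  · intro hn
    by_contra hdvd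
    have hcop : IsCoprime (p : ℤ) n := by
      rw [Int.isCoprime_iff_gcd_eq_one]
      rw [Int.gcd]
      simp only [Int.natAbs_natCast]
      refine (Nat.Prime.coprime_iff_not_dvd hp).mpr ?_
      intro h
      exact hdvd (Int.natCast_dvd.mpr h)
    obtain ⟨u, v, huv⟩ := hcop
    apply hPne
    rw [Ideal.eq_top_iff_one]
    have : (1 : R) = (u : R) * (p : R) + (v : R) * (n : R) := by
      have := congrArg (fun z : ℤ => (z : R)) huv
      push_cast at this
      simpa using this.symm
    rw [this]
    exact P.add_mem (P.mul_mem_left _ hpP) (P.mul_mem_left _ hn)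
  · rintro ⟨c, rfl⟩
    push_cast
    exact P.mul_mem_right _ hpP

lemma two_ramified_of_trace_even (h2 : Module.finrank ℤ R = 2) (htr : ∀ x : R, (2:ℤ) ∣ Algebra.trace ℤ R x) :
    ∃ P : Ideal R, P.IsPrime ∧ Ideal.span {((2:ℕ) : R)} = P ^ 2 := by
  classical
  set I2 : Ideal R := Ideal.span {((2:ℕ) : R)} with hI2
  have hcast : ((2:ℕ) : R) = ((2:ℤ) : R) := by push_cast; ring
  let A := R ⧸ I2
  let mk : R →+* A := Ideal.Quotient.mk I2
  have hone : (1 : A) ≠ 0 := by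
    intro h
    have h1 : (1 : R) ∈ I2 := Ideal.Quotient.eq_zero_iff_mem.mp
      (show mk 1 = 0 by rwa [map_one])
    have : ((1:ℕ) : R) ∈ Ideal.span {((2:ℕ) : R)} := by rwa [Nat.cast_one]
    rw [natCast_mem_span_natCast_iff h2 (by norm_num)] at this
    omega
  have htwoA : (2 : A) = 0 := by
    have : mk ((2:ℕ) : R) = 0 := Ideal.Quotient.eq_zero_iff_mem.mpr
      (Ideal.subset_span (by simp))
    rwa [map_natCast] at this
  have hneg : (-1 : A) = 1 := by
    have : (1 : A) + 1 = 0 := by rw [one_add_one_eq_two, htwoA]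
    rw [neg_eq_iff_add_eq_zero]
    exact this
  -- dichotomy of squares
  have hdich : ∀ x : R, mk x ^ 2 = 0 ∨ mk x ^ 2 = 1 := by
    intro x
    obtain ⟨t, ht⟩ := htr x
    have hq := quadid h2 x
    have : mk x ^ 2 = (((- Algebra.norm ℤ x : ℤ)) : A) := by
      have := congrArg mk hq
      rw [map_sub] at this
      rw [pow_two, ← map_mul mk]  -- workaround
      rw [this]
      have e1 : mk ((Algebra.trace ℤ R x : ℤ) • x) = 0 := by
        rw [ht, zsmul_eq_mul]
        push_cast
        rw [map_mul]
        have : mk ((2:R)) = 0 := by rw [map_ofNat, htwoA]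
        rw [show ((2:ℤ) * (t:ℤ) : ℤ) = 2*t from rfl] at *
        calc mk (2 * (t:R) * x) = mk 2 * mk ((t:R)*x) := by rw [← map_mul]; ring_nf
          _ = 0 := by rw [this, zero_mul]
      rw [e1, zero_sub, zsmul_eq_mul, mul_one, map_intCast]
      push_cast
      ring
    rw [this]
    rcases Int.even_or_odd (- Algebra.norm ℤ x) with ⟨c, hc⟩ | ⟨c, hc⟩
    · left
      rw [hc]
      push_cast
      rw [show ((c:A) + c) = 2 * c by ring, htwoA, zero_mul]
    · right
      rw [hc]
      push_cast
      rw [show ((2:A) * c + 1) = 2 * c + 1 by ring, htwoA]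
      ring
  -- key characterization of primes above 2
  have key : ∀ Q : Ideal R, Q.IsPrime → I2 ≤ Q → ∀ x : R, x ∈ Q ↔ mk x ^ 2 = 0 := by
    intro Q hQ hle x
    constructor
    · intro hx
      rcases hdich x with h | h
      · exact h
      · exfalso
        have : x * x - 1 ∈ I2 := by
          rw [← Ideal.Quotient.eq_zero_iff_mem]
          show mk (x*x-1) = 0
          rw [map_sub, map_one, map_mul, ← pow_two, h, sub_self]
        have h1 : (1:R) ∈ Q := by
          have hxx : x * x ∈ Q := Q.mul_mem_left x hx
          have := hle this
          have := Q.sub_mem hxx this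
          simpa using this
        exact hQ.ne_top (Ideal.eq_top_of_isUnit_mem Q h1 isUnit_one)
    · intro hx
      have : x * x ∈ I2 := by
        rw [← Ideal.Quotient.eq_zero_iff_mem]
        show mk (x*x) = 0
        rw [map_mul, ← pow_two, hx]
      have := hle this
      rcases hQ.mem_or_mem this with h | h <;> exact h
  -- existence of a prime above 2
  have hI2netop : I2 ≠ ⊤ := by
    intro h
    have : (1:R) ∈ I2 := h ▸ Submodule.mem_top
    have : ((1:ℕ) : R) ∈ Ideal.span {((2:ℕ) : R)} := by rwa [Nat.cast_one]
    rw [natCast_mem_span_natCast_iff h2 (by norm_num)] at this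
    omega
  obtain ⟨Q0, hQ0max, hQ0le⟩ := Ideal.exists_le_maximal I2 hI2netop
  have hQ0 : Q0.IsPrime := hQ0max.isPrime
  -- uniqueness
  have huniq : ∀ Q : Ideal R, Q.IsPrime → I2 ≤ Q → Q = Q0 := by
    intro Q hQ hle
    ext x
    rw [key Q hQ hle x, key Q0 hQ0 hQ0le x]
  -- card of R/Q0 is 2
  have hAfin : Finite A := by
    have := finite_quot_intCast h2 (c := (2:ℤ)) (by norm_num)
    rw [← hcast] at this
    exact this
  have hfinQ0 : Finite (R ⧸ Q0) := by
    apply Finite.of_surjective (Ideal.Quotient.factor hQ0le)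
    intro y
    obtain ⟨x, hx⟩ := Ideal.Quotient.mk_surjective y
    exact ⟨mk x, by rw [← hx]; exact Ideal.Quotient.factor_mk _ _⟩
  have hcard2 : Nat.card (R ⧸ Q0) = 2 := by
    have hle2 : Nat.card (R ⧸ Q0) ≤ 2 := by
      have hsurj : Function.Surjective (fun i : Fin 2 => ((i : ℕ) : R ⧸ Q0)) := by
        intro y
        obtain ⟨x, hx⟩ := Ideal.Quotient.mk_surjective y
        rcases hdich x with h | h
        · refine ⟨⟨0, by norm_num⟩, ?_⟩
          have : x ∈ Q0 := (key Q0 hQ0 hQ0le x).mpr h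
          simp only [Fin.val_mk, Nat.cast_zero]
          rw [← hx, eq_comm]
          exact Ideal.Quotient.eq_zero_iff_mem.mpr this
        · refine ⟨⟨1, by norm_num⟩, ?_⟩
          have hsq : mk (x - 1) ^ 2 = 0 := by
            rw [map_sub, map_one, sub_sq, h]
            linear_combination (1 - mk x) * htwoA
          have : x - 1 ∈ Q0 := (key Q0 hQ0 hQ0le (x-1)).mpr hsq
          simp only [Fin.val_mk, Nat.cast_one]
          rw [← hx]
          have := Ideal.Quotient.eq_zero_iff_mem.mpr this
          rw [map_sub, map_one, sub_eq_zero] at this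
          exact this.symm
      calc Nat.card (R ⧸ Q0) ≤ Nat.card (Fin 2) := Nat.card_le_card_of_surjective _ hsurj
        _ = 2 := by simp
    have hge2 : 2 ≤ Nat.card (R ⧸ Q0) := by
      have : Nontrivial (R ⧸ Q0) := Ideal.Quotient.nontrivial_iff.mpr hQ0.ne_top
      exact Finite.one_lt_card_iff_nontrivial.mpr this
    omega
  have habsQ0 : Ideal.absNorm Q0 = 2 := by
    rw [Ideal.absNorm_apply, Submodule.cardQuot_apply, hcard2]
  -- factor I2
  have hI2nebot : I2 ≠ ⊥ := by
    rw [hI2, Ne, Ideal.span_singleton_eq_bot]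
    intro h
    rw [hcast] at h
    exact_mod_cast h
  have hfactors := UniqueFactorizationMonoid.factors_prod hI2nebot
  rw [associated_iff_eq] at hfactors
  have hallQ0 : ∀ J ∈ UniqueFactorizationMonoid.factors I2, J = Q0 := by
    intro J hJ
    have hJp : Prime J := UniqueFactorizationMonoid.prime_of_factor J hJ
    have hJdvd : J ∣ I2 := UniqueFactorizationMonoid.dvd_of_mem_factors hJ
    exact huniq J (Ideal.isPrime_of_prime hJp) (Ideal.le_of_dvd hJdvd)
  have hrep := Multiset.eq_replicate_card.mpr hallQ0
  rw [hrep, Multiset.prod_replicate] at hfactors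
  set e := Multiset.card (UniqueFactorizationMonoid.factors I2) with he
  have habs : Ideal.absNorm I2 = 4 := by
    rw [hI2, hcast, Ideal.absNorm_span_singleton]
    have : Algebra.norm ℤ (((2:ℤ)):R) = (2:ℤ)^2 := norm_intCast h2 2
    rw [this]; norm_num
  have : (2:ℕ) ^ e = 4 := by
    rw [← habsQ0, ← map_pow, hfactors, habs]
  have he2 : e = 2 := by
    have : (2:ℕ)^e = 2^2 := by omega
    exact Nat.pow_right_injective (le_refl 2) this
  exact ⟨Q0, hQ0, by rw [← hfactors, he2]⟩

lemma exists_trace_not_dvd (h2 : Module.finrank ℤ R = 2) {p : ℕ} (hp : p.Prime)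
    (hunram : ¬∃ P : Ideal R, P.IsPrime ∧ Ideal.span {((p:ℕ) : R)} = P ^ 2) :
    ∃ x : R, ¬ ((p:ℤ) ∣ Algebra.trace ℤ R x) := by
  by_contra hcon
  push_neg at hcon
  rcases hp.eq_two_or_odd' with rfl | hodd
  · exact hunram (two_ramified_of_trace_even h2 hcon)
  -- odd case
  set Ip : Ideal R := Ideal.span {((p:ℕ) : R)} with hIp
  have hcast : ((p:ℕ) : R) = ((p:ℤ) : R) := by push_cast; ring
  let A := R ⧸ Ip
  let mk : R →+* A := Ideal.Quotient.mk Ip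
  have hpA : ((p:ℕ) : A) = 0 := by
    have : mk ((p:ℕ) : R) = 0 := Ideal.Quotient.eq_zero_iff_mem.mpr
      (Ideal.subset_span (by simp))
    rwa [map_natCast] at this
  have hsq : ∀ x : R, ∃ c : ℤ, mk x * mk x = (c : A) := by
    intro x
    obtain ⟨t, ht⟩ := hcon x
    refine ⟨- Algebra.norm ℤ x, ?_⟩
    have hq := congrArg mk (quadid h2 x)
    rw [map_sub, map_mul] at hq
    have e1 : mk ((Algebra.trace ℤ R x : ℤ) • x) = 0 := by
      rw [ht, zsmul_eq_mul]
      push_cast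
      rw [map_mul, map_mul]
      have hmkp : mk (((p:ℕ)) : R) = 0 := by
        rw [map_natCast]; exact hpA
      rw [hmkp]
      ring
    rw [e1, zero_sub, zsmul_eq_mul, mul_one, map_intCast] at hq
    rw [hq]
    push_cast
    ring
  have hdbl : ∀ x : R, ∃ c : ℤ, mk x + mk x = (c : A) := by
    intro x
    obtain ⟨c1, hc1⟩ := hsq (x + 1)
    obtain ⟨c2, hc2⟩ := hsq x
    refine ⟨c1 - c2 - 1, ?_⟩
    have : mk (x+1) * mk (x+1) = mk x * mk x + (mk x + mk x) + 1 := by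
      rw [← map_mul, ← map_mul]
      rw [show (x+1)*(x+1) = x*x + (x + x) + 1 by ring]
      rw [map_add, map_add, map_add, map_one, map_mul]
    rw [hc1, hc2] at this
    push_cast
    linear_combination -this
  -- coprimality of 2 and p
  have hco : IsCoprime (2:ℤ) (p:ℤ) := by
    rw [Int.isCoprime_iff_gcd_eq_one]
    have : ¬ (2 ∣ p) := by
      intro h
      rcases hodd with ⟨m, hm⟩
      omega
    have h1 : Nat.Coprime 2 p := (Nat.Prime.coprime_iff_not_dvd Nat.prime_two).mpr this
    simpa [Int.gcd] using h1
  obtain ⟨u, v, huv⟩ := hco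
  -- every element of A is an integer
  have hsurjZ : ∀ y : A, ∃ n : ℤ, y = (n : A) := by
    intro y
    obtain ⟨x, hx⟩ := Ideal.Quotient.mk_surjective y
    obtain ⟨c, hc⟩ := hdbl x
    refine ⟨u * c, ?_⟩
    have h1 : ((2 * u + (p:ℤ) * v : ℤ) : A) = 1 := by
      have hz : (2 * u + (p:ℤ) * v : ℤ) = 1 := by linear_combination huv
      rw [hz]; exact Int.cast_one
    calc y = mk x * 1 := by rw [mul_one, hx]
      _ = mk x * ((2 * u + (p:ℤ) * v : ℤ) : A) := by rw [h1]
      _ = (u : A) * (mk x + mk x) + (v:A) * ((p:ℕ):A) * mk x := by rw [Int.cast_add, Int.cast_mul, Int.cast_mul]; push_cast; ring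
      _ = ((u * c : ℤ) : A) := by rw [hc, hpA, Int.cast_mul]; ring
  -- bound the cardinality
  have hAfin : Finite A := by
    have := finite_quot_intCast h2 (c := (p:ℤ)) (by exact_mod_cast hp.ne_zero)
    rw [← hcast] at this
    exact this
  have hsurj : Function.Surjective (fun i : Fin p => ((i : ℕ) : A)) := by
    intro y
    obtain ⟨n, hn⟩ := hsurjZ y
    have hp0 : (0:ℤ) < (p:ℤ) := by exact_mod_cast hp.pos
    refine ⟨⟨(n % (p:ℤ)).toNat, ?_⟩, ?_⟩
    · have h1 : n % (p:ℤ) < (p:ℤ) := Int.emod_lt_of_pos n hp0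
      have h2 : 0 ≤ n % (p:ℤ) := Int.emod_nonneg n (by omega)
      omega
    · have h2' : 0 ≤ n % (p:ℤ) := Int.emod_nonneg n (by omega)
      have hc := congrArg (fun z : ℤ => ((z : ℤ) : A)) (Int.mul_ediv_add_emod n (p:ℤ))
      rw [Int.cast_add, Int.cast_mul, Int.cast_natCast] at hc
      rw [hpA, zero_mul, zero_add] at hc
      simp only [Fin.val_mk]
      rw [hn, ← hc, ← Int.cast_natCast, Int.toNat_of_nonneg h2']
  have hcardle : Nat.card A ≤ p := by
    calc Nat.card A ≤ Nat.card (Fin p) := Nat.card_le_card_of_surjective _ hsurj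
      _ = p := by simp
  have hcardA : Nat.card A = p^2 := by
    have hthis := card_quot_intCast h2 (c := (p:ℤ))
    rw [← hcast] at hthis
    have h4 : ((p:ℤ)^2).natAbs = p^2 := by
      rw [Int.natAbs_pow]
      simp
    exact hthis.trans h4
  rw [hcardA] at hcardle
  have := hp.two_le
  nlinarith


lemma absNorm_span_p (h2 : Module.finrank ℤ R = 2) {p : ℕ} : Ideal.absNorm (Ideal.span {((p:ℕ) : R)}) = p ^ 2 := by
  have hcast : ((p:ℕ) : R) = ((p:ℤ) : R) := by push_cast; ring
  rw [hcast, Ideal.absNorm_span_singleton, norm_intCast h2, Int.natAbs_pow]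
  simp

lemma prime_of_absNorm_p (h2 : Module.finrank ℤ R = 2) {p : ℕ} (hp : p.Prime) {J : Ideal R} (hJ : Ideal.absNorm J = p) :
    J.IsPrime := by
  have hJtop : J ≠ ⊤ := by
    intro h
    rw [h, Ideal.absNorm_top] at hJ
    have := hp.one_lt
    omega
  obtain ⟨M, hMmax, hJM⟩ := Ideal.exists_le_maximal J hJtop
  obtain ⟨X, hX⟩ := (Ideal.dvd_iff_le).mpr hJM
  have habs : p = Ideal.absNorm M * Ideal.absNorm X := by
    rw [← hJ, hX, map_mul]
  have hM1 : Ideal.absNorm M ≠ 1 := by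
    intro h
    exact hMmax.ne_top (Ideal.absNorm_eq_one_iff.mp h)
  have hMdvd : Ideal.absNorm M ∣ p := ⟨_, habs⟩
  rcases hp.eq_one_or_self_of_dvd _ hMdvd with h | h
  · exact absurd h hM1
  · have hp0 : 0 < p := hp.pos
    rw [h] at habs
    have hX1 : Ideal.absNorm X = 1 := by
      have : p * 1 = p * Ideal.absNorm X := by rw [mul_one]; exact habs
      exact (Nat.eq_of_mul_eq_mul_left hp0 this).symm
    have : X = ⊤ := Ideal.absNorm_eq_one_iff.mp hX1
    rw [this, Ideal.mul_top] at hX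
    rw [hX]
    exact hMmax.isPrime

lemma factor_dichotomy (h2 : Module.finrank ℤ R = 2) {p : ℕ} (hp : p.Prime)
    (hunram : ¬∃ P : Ideal R, P.IsPrime ∧ Ideal.span {((p:ℕ) : R)} = P ^ 2)
    (P : Ideal R) (hP : P.IsPrime) (hPp : P ∣ Ideal.span {((p:ℕ) : R)}) :
    (Ideal.span {((p:ℕ) : R)} = P) ∨
    (∃ J : Ideal R, J.IsPrime ∧ J ≠ P ∧ Ideal.span {((p:ℕ) : R)} = P * J ∧
      Ideal.map (kconjEquiv h2) P = J) := by
  set Ip : Ideal R := Ideal.span {((p:ℕ) : R)} with hIp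
  have hpR0 : ((p:ℕ) : R) ≠ 0 := by exact_mod_cast hp.ne_zero
  have hIpbot : Ip ≠ ⊥ := by
    rw [hIp, Ne, Ideal.span_singleton_eq_bot]; exact hpR0
  have hPbot : P ≠ ⊥ := by
    intro h
    rw [h] at hPp
    have := Ideal.le_of_dvd hPp
    rw [le_bot_iff] at this
    exact hIpbot this
  have hPmax : P.IsMaximal := hP.isMaximal hPbot
  have habsIp : Ideal.absNorm Ip = p ^ 2 := absNorm_span_p h2
  obtain ⟨J, hJ⟩ := hPp
  have habs : p ^ 2 = Ideal.absNorm P * Ideal.absNorm J := by rw [← habsIp, hJ, map_mul]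
  have hP1 : Ideal.absNorm P ≠ 1 := by
    intro h
    exact hP.ne_top (Ideal.absNorm_eq_one_iff.mp h)
  have hPdvd : Ideal.absNorm P ∣ p ^ 2 := ⟨_, habs⟩
  obtain ⟨i, hi2, hieq⟩ := (Nat.dvd_prime_pow hp).mp hPdvd
  interval_cases i
  · rw [pow_zero] at hieq; exact absurd hieq hP1
  · -- absNorm P = p, split case
    right
    rw [pow_one] at hieq
    have hJnorm : Ideal.absNorm J = p := by
      have hp0 : 0 < p := hp.pos
      rw [hieq] at habs
      have h' : p * p = p * Ideal.absNorm J := by rw [← habs]; ring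
      exact (Nat.eq_of_mul_eq_mul_left hp0 h').symm
    have hJprime : J.IsPrime := prime_of_absNorm_p h2 hp hJnorm
    have hJbot : J ≠ ⊥ := by
      intro h
      rw [h, Ideal.absNorm_bot] at hJnorm
      exact hp.ne_zero hJnorm.symm
    have hJmax : J.IsMaximal := hJprime.isMaximal hJbot
    have hJneP : J ≠ P := by
      intro h
      exact hunram ⟨P, hP, by rw [hJ, h, pow_two]⟩
    have hpmemP : ((p:ℕ) : R) ∈ P := Ideal.le_of_dvd ⟨J, hJ⟩ (Ideal.subset_span rfl)
    have hpmemJ : ((p:ℕ) : R) ∈ J := by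
      have hle : Ip ≤ J := by rw [hJ]; exact Ideal.mul_le_right
      exact hle (Ideal.subset_span rfl)
    set σ := kconjEquiv h2 with hσ
    have hσP_prime : (Ideal.map σ P).IsPrime := Ideal.map_isPrime_of_equiv σ
    have hpmemσP : ((p:ℕ) : R) ∈ Ideal.map σ P := by
      have hm := Ideal.mem_map_of_mem σ hpmemP
      rwa [show σ ((p:ℕ):R) = ((p:ℕ):R) by
        rw [hσ, kconjEquiv_apply h2, kconj_natCast h2]] at hm
    have hσPneP : Ideal.map σ P ≠ P := by
      intro hσPP
      have hcop : P ⊔ J = ⊤ := Ideal.IsMaximal.coprime_of_ne hPmax hJmax (Ne.symm hJneP)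
      have h1mem : (1:R) ∈ P ⊔ J := by rw [hcop]; exact Submodule.mem_top
      obtain ⟨x, hxP, y, hyJ, hxy⟩ := Submodule.mem_sup.mp h1mem
      have hσx : kconj x ∈ P := by
        have hm := Ideal.mem_map_of_mem σ hxP
        rw [show σ x = kconj x from by rw [hσ, kconjEquiv_apply h2]] at hm
        rwa [hσPP] at hm
      have htrx : (p:ℤ) ∣ Algebra.trace ℤ R x := by
        have hmem : ((Algebra.trace ℤ R x : ℤ) : R) ∈ P := by
          rw [← add_kconj x]; exact P.add_mem hxP hσx
        exact (intCast_mem_prime_iff hp hP hpmemP hP.ne_top _).mp hmem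
      have hnmx : (p:ℤ) ∣ Algebra.norm ℤ x := by
        have hmem : ((Algebra.norm ℤ x : ℤ) : R) ∈ P := by
          rw [← mul_kconj h2 x]; exact P.mul_mem_right _ hxP
        exact (intCast_mem_prime_iff hp hP hpmemP hP.ne_top _).mp hmem
      have hnmJ : ((Algebra.norm ℤ x : ℤ) : R) ∈ J := by
        obtain ⟨c, hc⟩ := hnmx
        rw [hc]
        push_cast
        exact J.mul_mem_right _ hpmemJ
      have hσxJ : kconj x ∈ J := by
        have h1 : kconj x * y ∈ J := J.mul_mem_left _ hyJ
        have heq : kconj x = ((Algebra.norm ℤ x : ℤ):R) + kconj x * y := by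
          calc kconj x = kconj x * (x + y) := by rw [hxy, mul_one]
            _ = x * kconj x + kconj x * y := by ring
            _ = ((Algebra.norm ℤ x : ℤ):R) + kconj x * y := by rw [mul_kconj h2]
        rw [heq]
        exact J.add_mem hnmJ h1
      have htrJ : ((Algebra.trace ℤ R x : ℤ):R) ∈ J := by
        obtain ⟨t, ht⟩ := htrx
        rw [ht]
        push_cast
        exact J.mul_mem_right _ hpmemJ
      have hxJ : x ∈ J := by
        have heq : x = ((Algebra.trace ℤ R x : ℤ):R) - kconj x := by
          rw [← add_kconj x]; ring
        rw [heq]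
        exact J.sub_mem htrJ hσxJ
      have h1J : (1:R) ∈ J := by rw [← hxy]; exact J.add_mem hxJ hyJ
      exact hJprime.ne_top ((Ideal.eq_top_iff_one J).mpr h1J)
    have hσPbot : Ideal.map σ P ≠ ⊥ := by
      intro h
      rw [h] at hpmemσP
      exact hpR0 ((Submodule.mem_bot R).mp hpmemσP)
    have hle : Ip ≤ Ideal.map σ P := by
      rw [hIp]
      exact (Ideal.span_singleton_le_iff_mem _).mpr hpmemσP
    have hmle : P * J ≤ Ideal.map σ P := by rw [← hJ]; exact hle
    rcases hσP_prime.mul_le.mp hmle with h | h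
    · exact absurd (hPmax.eq_of_le hσP_prime.ne_top h).symm hσPneP
    · exact ⟨J, hJprime, hJneP, hJ, (hJmax.eq_of_le hσP_prime.ne_top h).symm⟩
  · -- absNorm P = p^2: inert case
    left
    have hX1 : Ideal.absNorm J = 1 := by
      have hp0 : 0 < p ^ 2 := pow_pos hp.pos 2
      rw [hieq] at habs
      have h' : p^2 * 1 = p^2 * Ideal.absNorm J := by rw [mul_one]; exact habs
      exact (Nat.eq_of_mul_eq_mul_left hp0 h').symm
    have : J = ⊤ := Ideal.absNorm_eq_one_iff.mp hX1
    rw [hJ, this, Ideal.mul_top]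

lemma span_pow_cast (h2 : Module.finrank ℤ R = 2) (p l : ℕ) :
    Ideal.span {((p ^ l : ℕ) : R)} = Ideal.span {((p:ℕ) : R)} ^ l := by
  rw [Ideal.span_singleton_pow]
  norm_cast

lemma base_case (h2 : Module.finrank ℤ R = 2) {p : ℕ} (hp : p.Prime)
    (hunram : ¬∃ P : Ideal R, P.IsPrime ∧ Ideal.span {((p:ℕ) : R)} = P ^ 2)
    (P : Ideal R) (hP : P.IsPrime) (hPp : P ∣ Ideal.span {((p:ℕ) : R)})
    (l : ℕ) (hl : 1 ≤ l) :
    {β : R ⧸ Ideal.span {((p ^ l : ℕ) : R)} |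
        ∃ b : R, Ideal.Quotient.mk (Ideal.span {((p ^ l : ℕ) : R)}) b = β ∧
          Algebra.norm ℤ b ≡ 1 [ZMOD ((p : ℤ) ^ l)] ∧ b - 1 ∈ P ^ l} = {1} := by
  set Il : Ideal R := Ideal.span {((p ^ l : ℕ) : R)} with hIl
  have hIl_pow : Il = Ideal.span {((p:ℕ) : R)} ^ l := span_pow_cast h2 p l
  apply Set.eq_singleton_iff_unique_mem.mpr
  constructor
  · refine ⟨1, map_one _, ?_, by rw [sub_self]; exact zero_mem _⟩
    rw [map_one]
  · rintro β ⟨b, rfl, hnm, hbP⟩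
    have hnmR : ((Algebra.norm ℤ b : ℤ) : R) - 1 ∈ Il := by
      obtain ⟨c, hc⟩ := Int.ModEq.dvd hnm
      rw [hIl]
      rw [Ideal.mem_span_singleton]
      refine ⟨-((c : ℤ) : R), ?_⟩
      have : ((Algebra.norm ℤ b : ℤ) : R) - 1 = -(((1 - Algebra.norm ℤ b : ℤ)) : R) := by
        push_cast; ring
      rw [this, hc]
      push_cast
      ring
    have goal_iff : Ideal.Quotient.mk Il b = 1 ↔ b - 1 ∈ Il := by
      rw [← map_one (Ideal.Quotient.mk Il), Ideal.Quotient.mk_eq_mk_iff_sub_mem]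

    rw [goal_iff]
    rcases factor_dichotomy h2 hp hunram P hP hPp with hinert | ⟨J, hJprime, hJneP, hsplit, hσP⟩
    · rw [hIl_pow, hinert]
      exact hbP
    · -- split case
      have hIpbot : Ideal.span {((p:ℕ) : R)} ≠ ⊥ := by
        rw [Ne, Ideal.span_singleton_eq_bot]
        exact_mod_cast hp.ne_zero
      have hPbot : P ≠ ⊥ := by
        intro h; rw [h, Ideal.bot_mul] at hsplit; exact hIpbot hsplit
      have hJbot : J ≠ ⊥ := by
        intro h; rw [h, Ideal.mul_bot] at hsplit; exact hIpbot hsplit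
      have hPmax := hP.isMaximal hPbot
      have hJmax := hJprime.isMaximal hJbot
      have hcop : P ⊔ J = ⊤ := Ideal.IsMaximal.coprime_of_ne hPmax hJmax (Ne.symm hJneP)
      have hcopl : P ^ l ⊔ J ^ l = ⊤ := Ideal.pow_sup_pow_eq_top hcop
      set σ := kconjEquiv h2 with hσdef
      have hσb1 : kconj b - 1 ∈ J ^ l := by
        have hm := Ideal.mem_map_of_mem σ hbP
        rw [Ideal.map_pow, hσP] at hm
        rwa [show σ (b - 1) = kconj b - 1 by
          rw [map_sub, hσdef, kconjEquiv_apply h2, kconjEquiv_apply h2, kconj_one h2]] at hm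
      have hnmJ' : ((Algebra.norm ℤ b : ℤ) : R) - 1 ∈ J ^ l := by
        have h1 : Il ≤ J ^ l := by
          rw [hIl_pow, hsplit, mul_pow]
          exact Ideal.mul_le_right
        exact h1 hnmR
      have hprod : kconj b * (b - 1) ∈ J ^ l := by
        have heq : kconj b * (b - 1) =
            (((Algebra.norm ℤ b : ℤ) : R) - 1) - (kconj b - 1) := by
          rw [mul_sub, mul_comm (kconj b) b, mul_kconj h2]
          ring
        rw [heq]
        exact Submodule.sub_mem _ hnmJ' hσb1
      have hσbJ : kconj b ∉ J := by
        intro h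
        have h1 : ((Algebra.norm ℤ b : ℤ) : R) ∈ J := by
          rw [← mul_kconj h2]
          exact J.mul_mem_left _ h
        have h2' : ((Algebra.norm ℤ b : ℤ) : R) - 1 ∈ J :=
          Ideal.pow_le_self (by omega) hnmJ'
        have : (1:R) ∈ J := by
          have := J.sub_mem h1 h2'
          simpa using this
        exact hJprime.ne_top ((Ideal.eq_top_iff_one J).mpr this)
      have hbJ : b - 1 ∈ J ^ l := by
        rcases Ideal.IsPrime.mul_mem_pow J hprod with h | h
        · exact absurd h hσbJ
        · exact h
      have hinf : b - 1 ∈ P ^ l ⊓ J ^ l := ⟨hbP, hbJ⟩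
      rw [← Ideal.mul_eq_inf_of_coprime hcopl] at hinf
      rw [hIl_pow, hsplit, mul_pow]
      exact hinf

lemma finite_quot_pow_cast (h2 : Module.finrank ℤ R = 2) {p : ℕ} (hp : p ≠ 0) (m : ℕ) :
    Finite (R ⧸ Ideal.span {((p ^ m : ℕ) : R)}) := by
  have hcast : ((p ^ m : ℕ) : R) = (((p:ℤ) ^ m : ℤ) : R) := by push_cast; ring
  rw [hcast]
  exact finite_quot_intCast h2 (by positivity)

lemma card_quot_p (h2 : Module.finrank ℤ R = 2) {p : ℕ} : Nat.card (R ⧸ Ideal.span {((p:ℕ) : R)}) = p ^ 2 := by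
  have hcast : ((p:ℕ) : R) = (((p:ℤ)) : R) := by push_cast; ring
  rw [hcast, card_quot_intCast h2, Int.natAbs_pow]
  simp

lemma norm_shift (h2 : Module.finrank ℤ R = 2) (b t : R) (c : ℤ) :
    Algebra.norm ℤ (b + (c:R) * t) = Algebra.norm ℤ b + c * Algebra.trace ℤ R (b * kconj t)
      + c^2 * Algebra.norm ℤ t := by
  have hconj : kconj (b + (c:R) * t) = kconj b + (c:R) * kconj t := by
    rw [kconj_add, kconj_mul h2, kconj_intCast h2]
  have hR : ((Algebra.norm ℤ (b + (c:R) * t) : ℤ) : R) =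
      ((Algebra.norm ℤ b + c * Algebra.trace ℤ R (b * kconj t) + c^2 * Algebra.norm ℤ t : ℤ) : R) := by
    rw [← mul_kconj h2, hconj]
    have e1 : (b + (c:R) * t) * (kconj b + (c:R) * kconj t)
        = b * kconj b + (c:R) * (b * kconj t + kconj (b * kconj t)) + (c:R)^2 * (t * kconj t) := by
      rw [kconj_mul h2, kconj_kconj h2]
      ring
    rw [e1, mul_kconj h2, mul_kconj h2, add_kconj]
    push_cast
    ring
  exact_mod_cast hR

lemma step_case (h2 : Module.finrank ℤ R = 2) {p : ℕ} (hp : p.Prime)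
    (hunram : ¬∃ P : Ideal R, P.IsPrime ∧ Ideal.span {((p:ℕ) : R)} = P ^ 2)
    (P : Ideal R) (hP : P.IsPrime) (hPp : P ∣ Ideal.span {((p:ℕ) : R)})
    (l k : ℕ) (hl : 1 ≤ l) (hlk : l ≤ k) :
    {β : R ⧸ Ideal.span {((p ^ (k+1) : ℕ) : R)} |
        ∃ b : R, Ideal.Quotient.mk (Ideal.span {((p ^ (k+1) : ℕ) : R)}) b = β ∧
          Algebra.norm ℤ b ≡ 1 [ZMOD ((p : ℤ) ^ (k+1))] ∧ b - 1 ∈ P ^ l}.ncard =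
    p * {β : R ⧸ Ideal.span {((p ^ k : ℕ) : R)} |
        ∃ b : R, Ideal.Quotient.mk (Ideal.span {((p ^ k : ℕ) : R)}) b = β ∧
          Algebra.norm ℤ b ≡ 1 [ZMOD ((p : ℤ) ^ k)] ∧ b - 1 ∈ P ^ l}.ncard := by
  classical
  have hpne : p ≠ 0 := hp.ne_zero
  have hpRne : ((p:ℕ) : R) ≠ 0 := by exact_mod_cast hpne
  set Ik : Ideal R := Ideal.span {((p ^ k : ℕ) : R)} with hIk
  set Ik1 : Ideal R := Ideal.span {((p ^ (k+1) : ℕ) : R)} with hIk1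
  set I1 : Ideal R := Ideal.span {((p:ℕ) : R)} with hI1
  have hle : Ik1 ≤ Ik := by
    rw [hIk1, hIk]
    apply (Ideal.span_singleton_le_iff_mem _).mpr
    rw [Ideal.mem_span_singleton]
    exact ⟨((p:ℕ):R), by push_cast; ring⟩
  haveI : Finite (R ⧸ Ik1) := finite_quot_pow_cast h2 hpne (k+1)
  haveI : Finite (R ⧸ Ik) := finite_quot_pow_cast h2 hpne k
  haveI : Finite (R ⧸ I1) := by
    have hcast : ((p:ℕ) : R) = (((p:ℤ)) : R) := by push_cast; ring
    show Finite (R ⧸ Ideal.span {((p:ℕ) : R)})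
    rw [hcast]
    exact finite_quot_intCast h2 (by exact_mod_cast hpne)
  set π : R ⧸ Ik1 →+* R ⧸ Ik := Ideal.Quotient.factor hle with hπ
  have hπmk : ∀ x : R, π (Ideal.Quotient.mk Ik1 x) = Ideal.Quotient.mk Ik x :=
    fun x => Ideal.Quotient.factor_mk hle x
  set Sk1 := {β : R ⧸ Ik1 | ∃ b : R, Ideal.Quotient.mk Ik1 b = β ∧
      Algebra.norm ℤ b ≡ 1 [ZMOD ((p : ℤ) ^ (k+1))] ∧ b - 1 ∈ P ^ l} with hSk1
  set Sk := {β : R ⧸ Ik | ∃ b : R, Ideal.Quotient.mk Ik b = β ∧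
      Algebra.norm ℤ b ≡ 1 [ZMOD ((p : ℤ) ^ k)] ∧ b - 1 ∈ P ^ l} with hSk
  have hmaps : ∀ β' ∈ Sk1, π β' ∈ Sk := by
    rintro β' ⟨b, rfl, hnm, hbP⟩
    exact ⟨b, (hπmk b), hnm.of_dvd (pow_dvd_pow _ (by omega)), hbP⟩
  have hpmemP : ((p:ℕ) : R) ∈ P := Ideal.le_of_dvd hPp (Ideal.subset_span rfl)
  have hpkP : ((p ^ k : ℕ) : R) ∈ P ^ l := by
    have h1 : ((p:ℕ) : R) ^ l ∈ P ^ l := Ideal.pow_mem_pow hpmemP l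
    have h2' : ((p ^ k : ℕ) : R) = ((p:ℕ) : R) ^ l * ((p:ℕ):R) ^ (k - l) := by
      push_cast
      rw [← pow_add]
      congr 1
      omega
    rw [h2']
    exact Ideal.mul_mem_right _ _ h1
  -- the fiber count
  have hfiber : ∀ β ∈ Sk, (Sk1 ∩ π ⁻¹' {β}).ncard = p := by
    rintro β ⟨b, hmkb, hnm, hbP⟩
    obtain ⟨c0, hc0⟩ := Int.ModEq.dvd hnm
    set a : ℤ := -c0 with ha0
    have ha : Algebra.norm ℤ b - 1 = (p:ℤ)^k * a := by rw [ha0]; linear_combination -hc0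
    -- the trace function on R/pR
    have hwd : ∀ t t' : R, t - t' ∈ I1 →
        ((Algebra.trace ℤ R (b * kconj t) : ℤ) : ZMod p)
          = ((Algebra.trace ℤ R (b * kconj t') : ℤ) : ZMod p) := by
      intro t t' ht
      rw [hI1, Ideal.mem_span_singleton] at ht
      obtain ⟨s, hs⟩ := ht
      rw [ZMod.intCast_eq_intCast_iff]
      have hdiff : Algebra.trace ℤ R (b * kconj t) - Algebra.trace ℤ R (b * kconj t')
          = (p:ℤ) * Algebra.trace ℤ R (b * kconj s) := by
        have e1 : b * kconj t - b * kconj t' = (p:ℤ) • (b * kconj s) := by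
          have e2 : kconj t - kconj t' = ((p:ℕ):R) * kconj s := by
            have : kconj t = kconj (t' + ((p:ℕ):R) * s) := by
              congr 1
              linear_combination hs
            rw [this, kconj_add, kconj_mul h2,
              show kconj (((p:ℕ)):R) = ((p:ℕ):R) by
                have := kconj_intCast h2 ((p:ℕ) : ℤ); push_cast at this ⊢; exact this]
            ring
          rw [zsmul_eq_mul]
          push_cast
          linear_combination b * e2
        rw [← map_sub, e1, map_smul, smul_eq_mul]
      exact (Int.modEq_iff_dvd.mpr ⟨-(Algebra.trace ℤ R (b * kconj s)), by linear_combination -hdiff⟩)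
    set f : R ⧸ I1 → ZMod p := fun τ => Quotient.liftOn' τ
      (fun t => ((Algebra.trace ℤ R (b * kconj t) : ℤ) : ZMod p))
      (fun x y hrel => hwd x y ((Submodule.quotientRel_def I1).mp hrel)) with hf
    have hf_mk : ∀ t : R, f (Ideal.Quotient.mk I1 t)
        = ((Algebra.trace ℤ R (b * kconj t) : ℤ) : ZMod p) := fun t => rfl
    have hadd : ∀ τ₁ τ₂, f (τ₁ + τ₂) = f τ₁ + f τ₂ := by
      intro τ₁ τ₂
      obtain ⟨t₁, rfl⟩ := Ideal.Quotient.mk_surjective τ₁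
      obtain ⟨t₂, rfl⟩ := Ideal.Quotient.mk_surjective τ₂
      rw [← map_add, hf_mk, hf_mk, hf_mk]
      rw [show b * kconj (t₁ + t₂) = b * kconj t₁ + b * kconj t₂ by rw [kconj_add]; ring]
      rw [map_add]
      push_cast
      ring
    have hnz : ∃ τ, f τ ≠ 0 := by
      by_contra hcon
      push_neg at hcon
      obtain ⟨y, hy⟩ := exists_trace_not_dvd h2 hp hunram
      apply hy
      set t : R := kconj (kconj b * y) with htdef
      have h1 : (p:ℤ) ∣ Algebra.trace ℤ R (b * kconj t) := by
        have := hcon (Ideal.Quotient.mk I1 t)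
        rw [hf_mk] at this
        exact_mod_cast (ZMod.intCast_zmod_eq_zero_iff_dvd _ _).mp this
      have h2' : b * kconj t = ((Algebra.norm ℤ b : ℤ) : R) * y := by
        rw [htdef, kconj_kconj h2, ← mul_assoc, mul_kconj h2]
      have h3 : Algebra.trace ℤ R (b * kconj t)
          = Algebra.norm ℤ b * Algebra.trace ℤ R y := by
        rw [h2']
        rw [show ((Algebra.norm ℤ b : ℤ) : R) * y = (Algebra.norm ℤ b : ℤ) • y by
          rw [zsmul_eq_mul]]
        rw [map_smul]
        simp
      have h4 : Algebra.norm ℤ b = 1 + (p:ℤ)^k * a := by linear_combination ha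
      rw [h4] at h3
      have h5 : Algebra.trace ℤ R (b * kconj t)
          = Algebra.trace ℤ R y + (p:ℤ)^k * a * Algebra.trace ℤ R y := by
        rw [h3]; ring
      have h6 : (p:ℤ) ∣ (p:ℤ)^k * a * Algebra.trace ℤ R y := by
        apply Dvd.dvd.mul_right
        apply Dvd.dvd.mul_right
        exact dvd_pow_self _ (by omega)
      have : Algebra.trace ℤ R y
          = Algebra.trace ℤ R (b * kconj t) - (p:ℤ)^k * a * Algebra.trace ℤ R y := by
        linear_combination -h5
      rw [this]
      exact dvd_sub h1 h6
    have hcardA : Nat.card (R ⧸ I1) = p ^ 2 := card_quot_p h2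
    have hfibF := fiber_count_zmod hp f hadd hnz hcardA (((-a : ℤ)) : ZMod p)
    -- the linear map μ and the bijection g
    set φ : R →ₗ[R] R ⧸ Ik1 :=
      (Submodule.mkQ Ik1).comp (LinearMap.lsmul R R ((p ^ k : ℕ) : R)) with hφ
    have hφker : I1 ≤ LinearMap.ker φ := by
      intro x hx
      rw [hI1, Ideal.mem_span_singleton] at hx
      obtain ⟨s, hs⟩ := hx
      rw [LinearMap.mem_ker, hφ]
      simp only [LinearMap.coe_comp, Function.comp_apply, LinearMap.lsmul_apply,
        Submodule.mkQ_apply, smul_eq_mul]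
      rw [Submodule.Quotient.mk_eq_zero]
      rw [hIk1, Ideal.mem_span_singleton, hs]
      exact ⟨s, by push_cast; ring⟩
    set μ : R ⧸ I1 →ₗ[R] R ⧸ Ik1 := Submodule.liftQ I1 φ hφker with hμ
    have hμ_mk : ∀ t : R, μ (Ideal.Quotient.mk I1 t)
        = Ideal.Quotient.mk Ik1 (((p ^ k : ℕ) : R) * t) := by
      intro t
      rw [hμ, show Ideal.Quotient.mk I1 t = Submodule.Quotient.mk t from rfl,
        Submodule.liftQ_apply, hφ]
      simp only [LinearMap.coe_comp, Function.comp_apply, LinearMap.lsmul_apply,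
        Submodule.mkQ_apply, smul_eq_mul]
      rfl
    set g : R ⧸ I1 → R ⧸ Ik1 := fun τ => Ideal.Quotient.mk Ik1 b + μ τ with hg
    have hg_mk : ∀ t : R, g (Ideal.Quotient.mk I1 t)
        = Ideal.Quotient.mk Ik1 (b + ((p ^ k : ℕ) : R) * t) := by
      intro t
      rw [hg]
      simp only
      rw [hμ_mk, map_add]
    have hginj : Function.Injective g := by
      intro τ τ' hgg
      have hμμ : μ τ = μ τ' := by
        rw [hg] at hgg
        simp only at hgg
        exact add_left_cancel hgg
      obtain ⟨t, rfl⟩ := Ideal.Quotient.mk_surjective τ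
      obtain ⟨t', rfl⟩ := Ideal.Quotient.mk_surjective τ'
      rw [hμ_mk, hμ_mk, Ideal.Quotient.mk_eq_mk_iff_sub_mem] at hμμ
      rw [hIk1, Ideal.mem_span_singleton] at hμμ
      obtain ⟨s, hs⟩ := hμμ
      rw [Ideal.Quotient.mk_eq_mk_iff_sub_mem, hI1, Ideal.mem_span_singleton]
      refine ⟨s, ?_⟩
      have hpk : ((p ^ k : ℕ) : R) ≠ 0 := by
        have : (p:ℕ)^k ≠ 0 := pow_ne_zero _ hpne
        exact_mod_cast this
      apply mul_left_cancel₀ hpk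
      rw [show ((p^k:ℕ):R) * (t - t') = ((p^k:ℕ):R) * t - ((p^k:ℕ):R) * t' by ring, hs]
      push_cast
      ring
    -- key set equality
    have hkey : Sk1 ∩ π ⁻¹' {β} = g '' {τ | f τ = ((-a : ℤ) : ZMod p)} := by
      ext β'
      constructor
      · rintro ⟨⟨b', hmkb', hnm', hb'P⟩, hπβ'⟩
        have hπeq : Ideal.Quotient.mk Ik b' = Ideal.Quotient.mk Ik b := by
          rw [← hπmk b', hmkb']
          rw [Set.mem_preimage, Set.mem_singleton_iff] at hπβ'
          rw [hπβ', ← hmkb]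
        rw [Ideal.Quotient.mk_eq_mk_iff_sub_mem, hIk, Ideal.mem_span_singleton] at hπeq
        obtain ⟨t, ht⟩ := hπeq
        refine ⟨Ideal.Quotient.mk I1 t, ?_, ?_⟩
        · -- f value
          rw [Set.mem_setOf_eq, hf_mk]
          have hb' : b' = b + ((p^k:ℕ):R) * t := by linear_combination ht
          have hns := norm_shift h2 b t ((p:ℤ)^k)
          have hcast2 : (((p:ℤ)^k : ℤ) : R) = ((p^k:ℕ):R) := by push_cast; ring
          rw [hcast2, ← hb'] at hns
          obtain ⟨c1, hc1⟩ := Int.ModEq.dvd hnm'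
          -- p^{k+1} * c1 = 1 - norm b'
          have hzeq : (p:ℤ)^k * ((p:ℤ) * c1 + a + Algebra.trace ℤ R (b * kconj t)
              + (p:ℤ)^k * Algebra.norm ℤ t) = 0 := by
            have : ((p:ℤ)^(k+1)) * c1 = 1 - Algebra.norm ℤ b' := hc1.symm
            rw [hns] at this
            linear_combination this - ha
          have hpk0 : ((p:ℤ))^k ≠ 0 := by positivity
          have hz2 : (p:ℤ) * c1 + a + Algebra.trace ℤ R (b * kconj t)
              + (p:ℤ)^k * Algebra.norm ℤ t = 0 := by
            rcases mul_eq_zero.mp hzeq with h | h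
            · exact absurd h hpk0
            · exact h
          rw [ZMod.intCast_eq_intCast_iff]
          apply Int.modEq_iff_dvd.mpr
          refine ⟨c1 + (p:ℤ)^(k-1) * Algebra.norm ℤ t, ?_⟩
          have hksplit : (p:ℤ)^k = (p:ℤ) * (p:ℤ)^(k-1) := by
            rw [← pow_succ']
            congr 1
            omega
          rw [hksplit] at hz2
          linear_combination -hz2
        · -- g value
          rw [hg_mk]
          rw [← hmkb']
          congr 1
          linear_combination -ht
      · rintro ⟨τ, hτ, rfl⟩
        obtain ⟨t, rfl⟩ := Ideal.Quotient.mk_surjective τ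
        rw [Set.mem_setOf_eq, hf_mk] at hτ
        rw [ZMod.intCast_eq_intCast_iff] at hτ
        obtain ⟨c1, hc1⟩ := Int.modEq_iff_dvd.mp hτ
        set b' : R := b + ((p^k:ℕ):R) * t with hb'
        constructor
        · refine ⟨b', by rw [hg_mk], ?_, ?_⟩
          · -- norm condition
            have hns := norm_shift h2 b t ((p:ℤ)^k)
            have hcast2 : (((p:ℤ)^k : ℤ) : R) = ((p^k:ℕ):R) := by push_cast; ring
            rw [hcast2, ← hb'] at hns
            apply Int.modEq_iff_dvd.mpr
            refine ⟨c1 - (p:ℤ)^(k-1) * Algebra.norm ℤ t, ?_⟩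
            have hexp : (p:ℤ)^(k+1) * (p:ℤ)^(k-1) = ((p:ℤ)^k)^2 := by
              rw [← pow_add, ← pow_mul]
              congr 1
              omega
            rw [hns]
            linear_combination -ha + (p:ℤ)^k * hc1 + (Algebra.norm ℤ t) * hexp
          · -- b' - 1 ∈ P^l
            rw [hb']
            have : b + ((p^k:ℕ):R) * t - 1 = (b - 1) + ((p^k:ℕ):R) * t := by ring
            rw [this]
            exact Submodule.add_mem _ hbP (Ideal.mul_mem_right _ _ hpkP)
        · rw [Set.mem_preimage, hg_mk, Set.mem_singleton_iff, hπmk, ← hmkb]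
          rw [Ideal.Quotient.mk_eq_mk_iff_sub_mem, hIk, Ideal.mem_span_singleton]
          exact ⟨t, by ring⟩
    rw [hkey, Set.ncard_image_of_injective _ hginj]
    exact hfibF
  -- assemble
  have := ncard_eq_mul_of_fibers π Sk1 Sk p hmaps (Set.toFinite _) hfiber
  rw [this]

end QuadRing

open NumberField

/-- let `p` be a prime unramified in the real quadratic field `K`
(i.e. `p·O_K` is not the square of a prime ideal), `P` a prime ideal dividing `p·O_K`,
and `1 ≤ l ≤ k`. Then the number of residue classes in `O_K/p^k·O_K` admitting a
representative `b` with `N(b) ≡ 1 (mod p^k)` and `b ≡ 1 (mod P^l)` equals `p^(k-l)`. -/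
theorem card_normOne_congruent_one_unramified
    (K : Type*) [Field K] [NumberField K]
    (hdeg : Module.finrank ℚ K = 2) (hreal : Nonempty (K →+* ℝ))
    (p : ℕ) (hp : p.Prime)
    (hunram : ¬∃ P : Ideal (𝓞 K), P.IsPrime ∧ Ideal.span {(p : 𝓞 K)} = P ^ 2)
    (P : Ideal (𝓞 K)) (hP : P.IsPrime) (hPp : P ∣ Ideal.span {(p : 𝓞 K)})
    (k l : ℕ) (hk : 1 ≤ k) (hl : 1 ≤ l) (hlk : l ≤ k) :
    Set.ncard {β : 𝓞 K ⧸ Ideal.span {((p ^ k : ℕ) : 𝓞 K)} |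
        ∃ b : 𝓞 K, Ideal.Quotient.mk (Ideal.span {((p ^ k : ℕ) : 𝓞 K)}) b = β ∧
          Algebra.norm ℤ b ≡ 1 [ZMOD ((p : ℤ) ^ k)] ∧ b - 1 ∈ P ^ l} = p ^ (k - l) := by
  have h2 : Module.finrank ℤ (𝓞 K) = 2 := by
    rw [NumberField.RingOfIntegers.rank]; exact hdeg
  have main : ∀ m : ℕ, l ≤ m →
      Set.ncard {β : 𝓞 K ⧸ Ideal.span {((p ^ m : ℕ) : 𝓞 K)} |
        ∃ b : 𝓞 K, Ideal.Quotient.mk (Ideal.span {((p ^ m : ℕ) : 𝓞 K)}) b = β ∧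
          Algebra.norm ℤ b ≡ 1 [ZMOD ((p : ℤ) ^ m)] ∧ b - 1 ∈ P ^ l} = p ^ (m - l) := by
    intro m hm
    induction m, hm using Nat.le_induction with
    | base =>
      rw [base_case h2 hp hunram P hP hPp l hl]
      rw [Set.ncard_singleton, Nat.sub_self, pow_zero]
    | succ n hn ih =>
      rw [step_case h2 hp hunram P hP hPp l n hl hn, ih]
      rw [show n + 1 - l = (n - l) + 1 by omega, pow_succ']
  exact main k hlk
end
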